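/- arXiv:0912.3516 — 6 statements merged into one kernel-verified Lean document; each statement's English description precedes it below -/
import Mathlib

section
/- Let Θ be uniformly distributed on (-π, π), let z ∈ [0,1), and write α = arccos(z). Then for every γ ∈ [0, π/2], the probability P(cos Θ > z and sin(Θ + γ) > z) equals (1/(2π)) · max(2α - π/2 + γ, 0). -/
/-!
Within `(-π, π)` and for `α = arccos z`, the condition `cos θ > z` says `|θ| < α`, and since
`sin (θ + γ) = cos (θ + γ - π / 2)` the condition `sin (θ + γ) > z` says `|θ + γ - π / 2| < α`.
For `α ≤ π / 2` and `0 ≤ γ ≤ π / 2` both together cut out the interval `(π / 2 - α - γ, α)`,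
whose length divided by `2π` is the probability.
-/

open MeasureTheory Real

namespace Real

theorem lt_cos_iff_abs_lt_arccos {z θ : ℝ} (hz : -1 ≤ z) (hθ : |θ| ≤ π) :
    z < cos θ ↔ |θ| < arccos z := by
  rcases le_or_gt z 1 with hz1 | hz1
  · conv_lhs => rw [← cos_abs θ, ← cos_arccos hz hz1]
    exact strictAntiOn_cos.lt_iff_gt ⟨arccos_nonneg z, arccos_le_pi z⟩ ⟨abs_nonneg θ, hθ⟩
  · rw [arccos_of_one_le hz1.le]
    exact iff_of_false (by linarith [cos_le_one θ]) (abs_nonneg θ).not_gt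

theorem lt_sin_iff_abs_sub_pi_div_two_lt_arccos {z x : ℝ} (hz : -1 ≤ z) (hx : |x - π / 2| ≤ π) :
    z < sin x ↔ |x - π / 2| < arccos z := by
  rw [← cos_sub_pi_div_two]
  exact lt_cos_iff_abs_lt_arccos hz hx

theorem Ioo_inter_setOf_lt_cos_and_lt_sin_add {z γ : ℝ} (hz : 0 ≤ z) (hγ₀ : 0 ≤ γ)
    (hγ : γ ≤ π / 2) :
    Set.Ioo (-π) π ∩ {θ | z < cos θ ∧ z < sin (θ + γ)} =
      Set.Ioo (π / 2 - arccos z - γ) (arccos z) := by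
  have hα : arccos z ≤ π / 2 := arccos_le_pi_div_two.2 hz
  have hz' : -1 ≤ z := by linarith
  ext θ
  simp only [Set.mem_inter_iff, Set.mem_ofPred_eq, Set.mem_Ioo]
  constructor
  · rintro ⟨⟨hθ₁, hθ₂⟩, hcos, hsin⟩
    obtain ⟨hθα₁, hθα₂⟩ := abs_lt.1 <|
      (lt_cos_iff_abs_lt_arccos hz' (abs_le.2 ⟨hθ₁.le, hθ₂.le⟩)).1 hcos
    have hshift : |θ + γ - π / 2| ≤ π := abs_le.2 ⟨by linarith, by linarith⟩
    obtain ⟨hsα, -⟩ := abs_lt.1 <| (lt_sin_iff_abs_sub_pi_div_two_lt_arccos hz' hshift).1 hsin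
    exact ⟨by linarith, hθα₂⟩
  · rintro ⟨hθ₁, hθ₂⟩
    have hθα : |θ| < arccos z := abs_lt.2 ⟨by linarith, hθ₂⟩
    have hshift : |θ + γ - π / 2| < arccos z := abs_lt.2 ⟨by linarith, by linarith⟩
    refine ⟨⟨by linarith, by linarith⟩, ?_, ?_⟩
    · exact (lt_cos_iff_abs_lt_arccos hz' (by linarith)).2 hθα
    · exact (lt_sin_iff_abs_sub_pi_div_two_lt_arccos hz' (by linarith)).2 hshift

end Real

theorem uniform_angle_joint_prob_general
    {Ω : Type*} [MeasureSpace Ω] (ℙ : Measure Ω)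
    (Θ : Ω → ℝ) (hΘ : Measure.map Θ ℙ =
      (ENNReal.ofReal (2 * Real.pi))⁻¹ • volume.restrict (Set.Ioo (-Real.pi) Real.pi))
    (z : ℝ) (hz : z ∈ Set.Ico (0 : ℝ) 1) (γ : ℝ) (hγ : γ ∈ Set.Icc (0 : ℝ) (Real.pi / 2)) :
    ℙ {ω | Real.cos (Θ ω) > z ∧ Real.sin (Θ ω + γ) > z} =
      ENNReal.ofReal ((1 / (2 * Real.pi)) * max (2 * Real.arccos z - Real.pi / 2 + γ) 0) := by
  have h2π : 0 < 2 * π := by positivity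
  have hvol : volume (Set.Ioo (-π) π) = ENNReal.ofReal (2 * π) := by
    rw [Real.volume_Ioo]; ring_nf
  have hunif : pdf.IsUniform Θ (Set.Ioo (-π) π) ℙ := by
    rwa [pdf.IsUniform, ProbabilityTheory.cond, hvol]
  have hS : MeasurableSet {θ : ℝ | z < cos θ ∧ z < sin (θ + γ)} :=
    (measurableSet_lt measurable_const measurable_cos).inter
      (measurableSet_lt measurable_const (measurable_sin.comp (measurable_add_const γ)))
  change ℙ (Θ ⁻¹' {θ | z < cos θ ∧ z < sin (θ + γ)}) = _
  rw [hunif.measure_preimage (hvol ▸ (ENNReal.ofReal_pos.2 h2π).ne') (hvol ▸ ENNReal.ofReal_ne_top)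
    hS, Ioo_inter_setOf_lt_cos_and_lt_sin_add hz.1 hγ.1 hγ.2, hvol, Real.volume_Ioo,
    ← ENNReal.ofReal_div_of_pos h2π]
  -- `ENNReal.ofReal` already truncates a negative interval length to `0`.
  rw [ENNReal.ofReal_mul (by positivity), ENNReal.ofReal_max, ENNReal.ofReal_zero, max_eq_left zero_le, ← ENNReal.ofReal_mul (by positivity)]
  ring_nf

theorem uniform_angle_joint_prob
    {Ω : Type*} [MeasureSpace Ω] (ℙ : Measure Ω) [IsProbabilityMeasure ℙ]
    (Θ : Ω → ℝ) (hΘ : Measure.map Θ ℙ =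
      (ENNReal.ofReal (2 * Real.pi))⁻¹ • volume.restrict (Set.Ioo (-Real.pi) Real.pi))
    (z : ℝ) (hz : z ∈ Set.Ico (0 : ℝ) 1) (γ : ℝ) (hγ : γ ∈ Set.Icc (0 : ℝ) (Real.pi / 2)) :
    ℙ {ω | Real.cos (Θ ω) > z ∧ Real.sin (Θ ω + γ) > z} =
      ENNReal.ofReal ((1 / (2 * Real.pi)) * max (2 * Real.arccos z - Real.pi / 2 + γ) 0) :=
  uniform_angle_joint_prob_general ℙ Θ hΘ z hz γ hγ
end

section
/- Let ν > 0 and let S be a positive random variable such that νS² has the chi-square distribution with ν degrees of freedom (i.e., the Gamma(ν/2, 1/2) distribution). Then for all z > 0, P(S⁻¹ > z) = a_ν z^{-ν}(1 - b_ν z^{-2}) + Δ(z), where a_ν = (ν/2)^{ν/2}/Γ(ν/2 + 1), b_ν = (ν/2)²/(ν/2 + 1), and 0 ≤ Δ(z) ≤ c_ν z^{-ν-4} for some constant c_ν > 0 depending only on ν. -/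
open MeasureTheory ProbabilityTheory Real Set

/-!
Since `S > 0`, the event `S⁻¹ > z` is the event `νS² < t` with `t = ν z⁻²`, whose probability is
the Gamma(a, 1/2) distribution function at `t`, `a = ν/2`, i.e. a multiple of the incomplete gamma
integral `∫₀ᵗ x^(a-1) e^(-x/2) dx`. Squeezing `e^(-u)` between `1 - u` and `1 - u + u²/2` and
integrating termwise gives the two leading terms exactly and an error of order `t^(a+2)`, which is
`z^(-ν-4)`.
-/

lemma exp_neg_le_one_sub_add_sq_div_two {u : ℝ} (hu : 0 ≤ u) : exp (-u) ≤ 1 - u + u ^ 2 / 2 := by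
  -- `(1 - u + u²/2)(1 + u + u²/2) = 1 + u⁴/4 ≥ 1`
  rw [exp_neg, inv_le_iff_one_le_mul₀' (exp_pos u)]
  calc (1 : ℝ) ≤ (1 + u + u ^ 2 / 2) * (1 - u + u ^ 2 / 2) := by nlinarith [pow_nonneg hu 4]
    _ ≤ exp u * (1 - u + u ^ 2 / 2) := by
      gcongr
      · nlinarith [sq_nonneg (u - 1)]
      · exact quadratic_le_exp_of_nonneg hu

lemma intervalIntegrable_rpow_sub_one_mul {a : ℝ} (ha : 0 < a) {g : ℝ → ℝ} (hg : Continuous g)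
    (t : ℝ) : IntervalIntegrable (fun x ↦ x ^ (a - 1) * g x) volume 0 t :=
  (intervalIntegral.intervalIntegrable_rpow' (by linarith)).mul_continuousOn hg.continuousOn

lemma integral_rpow_sub_one_mul_pow {a : ℝ} (ha : 0 < a) (k : ℕ) {t : ℝ} (ht : 0 ≤ t) :
    ∫ x in (0 : ℝ)..t, x ^ (a - 1) * x ^ k = t ^ (a + k) / (a + k) := by
  have hk : (0 : ℝ) ≤ k := k.cast_nonneg
  rw [intervalIntegral.integral_congr_ae (g := fun x ↦ x ^ (a - 1 + k)),
    integral_rpow (Or.inl (by linarith)), zero_rpow (by linarith)]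
  · ring_nf
  · refine ae_of_all _ fun x hx ↦ ?_
    rw [uIoc_of_le ht] at hx
    exact (rpow_add_natCast hx.1.ne' _ _).symm

section IncompleteGamma

variable {a : ℝ} (r : ℝ) {t : ℝ}

lemma integral_rpow_sub_one_mul_one_sub (ha : 0 < a) (ht : 0 ≤ t) :
    ∫ x in (0 : ℝ)..t, x ^ (a - 1) * (1 - r * x) = t ^ a / a - r * t ^ (a + 1) / (a + 1) := by
  have hi (k : ℕ) := intervalIntegrable_rpow_sub_one_mul ha (continuous_pow k) t
  have h0 := integral_rpow_sub_one_mul_pow ha 0 ht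
  have h1 := integral_rpow_sub_one_mul_pow ha 1 ht
  push_cast at h0 h1
  calc ∫ x in (0 : ℝ)..t, x ^ (a - 1) * (1 - r * x)
      = ∫ x in (0 : ℝ)..t, (x ^ (a - 1) * x ^ 0 - r * (x ^ (a - 1) * x ^ 1)) := by
        congr 1; ext x; ring
    _ = _ := by
      rw [intervalIntegral.integral_sub (hi 0) ((hi 1).const_mul r),
        intervalIntegral.integral_const_mul, h0, h1, add_zero]
      ring

lemma integral_rpow_sub_one_mul_one_sub_add_sq (ha : 0 < a) (ht : 0 ≤ t) :
    ∫ x in (0 : ℝ)..t, x ^ (a - 1) * (1 - r * x + (r * x) ^ 2 / 2) =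
      t ^ a / a - r * t ^ (a + 1) / (a + 1) + r ^ 2 * t ^ (a + 2) / (2 * (a + 2)) := by
  have hi (k : ℕ) := intervalIntegrable_rpow_sub_one_mul ha (continuous_pow k) t
  have h2 := integral_rpow_sub_one_mul_pow ha 2 ht
  push_cast at h2
  calc ∫ x in (0 : ℝ)..t, x ^ (a - 1) * (1 - r * x + (r * x) ^ 2 / 2)
      = ∫ x in (0 : ℝ)..t, (x ^ (a - 1) * (1 - r * x) + r ^ 2 / 2 * (x ^ (a - 1) * x ^ 2)) := by
        congr 1; ext x; ring
    _ = _ := by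
      rw [intervalIntegral.integral_add
          (intervalIntegrable_rpow_sub_one_mul ha (by fun_prop) t) ((hi 2).const_mul _),
        intervalIntegral.integral_const_mul, integral_rpow_sub_one_mul_one_sub r ha ht, h2]
      field_simp

lemma sub_le_integral_rpow_sub_one_mul_exp_neg_mul (ha : 0 < a) (ht : 0 ≤ t) :
    t ^ a / a - r * t ^ (a + 1) / (a + 1) ≤ ∫ x in (0 : ℝ)..t, x ^ (a - 1) * exp (-(r * x)) := by
  rw [← integral_rpow_sub_one_mul_one_sub r ha ht]
  refine intervalIntegral.integral_mono_on ht (intervalIntegrable_rpow_sub_one_mul ha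
    (by fun_prop) t) (intervalIntegrable_rpow_sub_one_mul ha (by fun_prop) t) fun x hx ↦ ?_
  exact mul_le_mul_of_nonneg_left (one_sub_le_exp_neg _) (rpow_nonneg hx.1 _)

lemma integral_rpow_sub_one_mul_exp_neg_mul_le (ha : 0 < a) (hr : 0 ≤ r) (ht : 0 ≤ t) :
    ∫ x in (0 : ℝ)..t, x ^ (a - 1) * exp (-(r * x)) ≤
      t ^ a / a - r * t ^ (a + 1) / (a + 1) + r ^ 2 * t ^ (a + 2) / (2 * (a + 2)) := by
  rw [← integral_rpow_sub_one_mul_one_sub_add_sq r ha ht]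
  refine intervalIntegral.integral_mono_on ht (intervalIntegrable_rpow_sub_one_mul ha
    (by fun_prop) t) (intervalIntegrable_rpow_sub_one_mul ha (by fun_prop) t) fun x hx ↦ ?_
  exact mul_le_mul_of_nonneg_left (exp_neg_le_one_sub_add_sq_div_two (mul_nonneg hr hx.1))
    (rpow_nonneg hx.1 _)

end IncompleteGamma

lemma gammaPDFReal_eq_indicator (a r : ℝ) :
    gammaPDFReal a r = (Ici 0).indicator fun x ↦ r ^ a / Gamma a * x ^ (a - 1) * exp (-(r * x)) := by
  ext x
  simp only [gammaPDFReal, indicator, mem_Ici]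

lemma gammaMeasure_real_Iio {a r t : ℝ} (ha : 0 < a) (hr : 0 < r) (ht : 0 ≤ t) :
    (gammaMeasure a r).real (Iio t) =
      r ^ a / Gamma a * ∫ x in (0 : ℝ)..t, x ^ (a - 1) * exp (-(r * x)) := by
  have := isProbabilityMeasure_gammaMeasure ha hr
  have hIio : Iio t =ᵐ[gammaMeasure a r] Iic t := by
    rw [gammaMeasure]; exact Iio_ae_eq_Iic
  rw [measureReal_congr hIio, ← cdf_eq_real, cdf_gammaMeasure_eq_integral ha hr,
    gammaPDFReal_eq_indicator, setIntegral_indicator measurableSet_Ici, Iic_inter_Ici,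
    integral_Icc_eq_integral_Ioc, ← intervalIntegral.integral_of_le ht,
    ← intervalIntegral.integral_const_mul]
  simp only [mul_assoc]

lemma gammaMeasure_real_Iio_sub_mem_Icc {a r t : ℝ} (ha : 0 < a) (hr : 0 < r) (ht : 0 ≤ t) :
    (gammaMeasure a r).real (Iio t) - (r * t) ^ a / Gamma (a + 1) * (1 - a / (a + 1) * (r * t)) ∈
      Icc 0 ((r * t) ^ (a + 2) / (2 * (a + 2) * Gamma a)) := by
  have hΓ : 0 < r ^ a / Gamma a := by have := Gamma_pos_of_pos ha; positivity
  have hlow := mul_le_mul_of_nonneg_left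
    (sub_le_integral_rpow_sub_one_mul_exp_neg_mul r ha ht) hΓ.le
  have hupp := mul_le_mul_of_nonneg_left
    (integral_rpow_sub_one_mul_exp_neg_mul_le r ha hr.le ht) hΓ.le
  have hmain : r ^ a / Gamma a * (t ^ a / a - r * t ^ (a + 1) / (a + 1)) =
      (r * t) ^ a / Gamma (a + 1) * (1 - a / (a + 1) * (r * t)) := by
    rw [rpow_add_one' ht (by positivity), mul_rpow hr.le ht, Gamma_add_one ha.ne']
    field_simp
  have herr : r ^ a / Gamma a * (r ^ 2 * t ^ (a + 2) / (2 * (a + 2))) =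
      (r * t) ^ (a + 2) / (2 * (a + 2) * Gamma a) := by
    rw [mul_rpow hr.le ht, rpow_add hr, rpow_two]
    field_simp
  rw [gammaMeasure_real_Iio ha hr ht, mem_Icc]
  rw [mul_add, hmain, herr] at hupp
  rw [hmain] at hlow
  constructor <;> linarith

lemma setOf_lt_inv_eq_preimage_Iio {Ω : Type*} {S : Ω → ℝ} (hS : ∀ ω, 0 < S ω) {ν z : ℝ}
    (hν : 0 < ν) (hz : 0 < z) :
    {ω | z < (S ω)⁻¹} = (fun ω ↦ ν * S ω ^ 2) ⁻¹' Iio (ν * z ^ (-2 : ℝ)) := by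
  ext ω
  rw [mem_ofPred_eq, mem_preimage, mem_Iio, lt_inv_comm₀ hz (hS ω), rpow_neg hz.le, rpow_two,
    mul_lt_mul_iff_right₀ hν, ← inv_pow, pow_lt_pow_iff_left₀ (hS ω).le (by positivity) two_ne_zero]

theorem chi_square_inverse_tail_expansion_general
    {Ω : Type*} [MeasurableSpace Ω] (P : Measure Ω)
    (ν : ℝ) (hν : 0 < ν)
    (S : Ω → ℝ) (hS : ∀ ω, 0 < S ω)
    (hchi : Measure.map (fun ω => ν * S ω ^ 2) P = gammaMeasure (ν / 2) (1 / 2)) :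
    ∃ c > (0 : ℝ), ∀ z > (0 : ℝ),
      0 ≤ (P {ω | (S ω)⁻¹ > z}).toReal -
          (ν / 2) ^ (ν / 2) / Real.Gamma (ν / 2 + 1) * z ^ (-ν) *
            (1 - (ν / 2) ^ 2 / (ν / 2 + 1) * z ^ (-2 : ℝ)) ∧
      (P {ω | (S ω)⁻¹ > z}).toReal -
          (ν / 2) ^ (ν / 2) / Real.Gamma (ν / 2 + 1) * z ^ (-ν) *
            (1 - (ν / 2) ^ 2 / (ν / 2 + 1) * z ^ (-2 : ℝ)) ≤ c * z ^ (-ν - 4) := by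
  have ha : 0 < ν / 2 := by positivity
  have := isProbabilityMeasure_gammaMeasure ha one_half_pos
  have hmeas : AEMeasurable (fun ω ↦ ν * S ω ^ 2) P :=
    .of_map_ne_zero (hchi ▸ IsProbabilityMeasure.ne_zero _)
  refine ⟨(ν / 2) ^ (ν / 2 + 2) / (2 * (ν / 2 + 2) * Gamma (ν / 2)),
    by have := Gamma_pos_of_pos ha; positivity, fun z hz ↦ ?_⟩
  have hprob : (P {ω | (S ω)⁻¹ > z}).toReal =
      (gammaMeasure (ν / 2) (1 / 2)).real (Iio (ν * z ^ (-2 : ℝ))) := by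
    rw [measureReal_def, ← hchi, Measure.map_apply_of_aemeasurable hmeas measurableSet_Iio,
      ← setOf_lt_inv_eq_preimage_Iio hS hν hz]
  have hu (b : ℝ) : (1 / 2 * (ν * z ^ (-2 : ℝ))) ^ b = (ν / 2) ^ b * z ^ (-2 * b) := by
    rw [show 1 / 2 * (ν * z ^ (-2 : ℝ)) = ν / 2 * z ^ (-2 : ℝ) by ring,
      mul_rpow ha.le (by positivity), ← rpow_mul hz.le]
  have h := gammaMeasure_real_Iio_sub_mem_Icc ha one_half_pos (t := ν * z ^ (-2 : ℝ))
    (by positivity)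
  rw [hu, hu, show -2 * (ν / 2) = -ν by ring, show -2 * (ν / 2 + 2) = -ν - 4 by ring,
    ← hprob] at h
  constructor
  · linear_combination h.1
  · linear_combination h.2

theorem chi_square_inverse_tail_expansion
    {Ω : Type*} [MeasurableSpace Ω] (P : Measure Ω) [IsProbabilityMeasure P]
    (ν : ℝ) (hν : 0 < ν)
    (S : Ω → ℝ) (hS : ∀ ω, 0 < S ω)
    (hchi : Measure.map (fun ω => ν * S ω ^ 2) P = gammaMeasure (ν / 2) (1 / 2)) :
    ∃ c > (0 : ℝ), ∀ z > (0 : ℝ),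
      0 ≤ (P {ω | (S ω)⁻¹ > z}).toReal -
          (ν / 2) ^ (ν / 2) / Real.Gamma (ν / 2 + 1) * z ^ (-ν) *
            (1 - (ν / 2) ^ 2 / (ν / 2 + 1) * z ^ (-2 : ℝ)) ∧
      (P {ω | (S ω)⁻¹ > z}).toReal -
          (ν / 2) ^ (ν / 2) / Real.Gamma (ν / 2 + 1) * z ^ (-ν) *
            (1 - (ν / 2) ^ 2 / (ν / 2 + 1) * z ^ (-2 : ℝ)) ≤ c * z ^ (-ν - 4) :=
  chi_square_inverse_tail_expansion_general P ν hν S hS hchi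
end

section
/- Let ν > 0, let S be positive with νS² chi-square with ν degrees of freedom, and let Z be standard normal independent of S. Then as x → ∞, P(S⁻¹ Z > x) = a_ν x^{-ν} ( E[Z₊^ν] - b_ν x^{-2} E[Z₊^{ν+2}] + O(x^{-4}) ), where Z₊ = max(Z,0), a_ν = (ν/2)^{ν/2}/Γ(ν/2+1), b_ν = (ν/2)²/(ν/2+1). -/
/-!
Conditioning on `Z`, independence gives `P(Z / S > x) = E[F(Z / x)]` with `F(y) = P(S < y)`.
Since `ν S²` is `Γ(ν/2, 1/2)`-distributed, `F(y)` is an incomplete gamma integral up to `ν y²`,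
and expanding `exp(-t/2) = 1 - t/2 + O(t²)` under it gives
`F(y) = a_ν y₊^ν - a_ν b_ν y₊^(ν+2) + O(y₊^(ν+4))` uniformly in `y`. Integrating this against the
law of `Z`, whose positive part has all moments, yields the expansion with error `O(x^(-ν-4))`.
-/

open MeasureTheory ProbabilityTheory Real Filter Asymptotics Set

lemma abs_exp_neg_sub_one_sub_le_sq {u : ℝ} (hu : 0 ≤ u) : |exp (-u) - (1 - u)| ≤ u ^ 2 := by
  have hlow : 1 - u ≤ exp (-u) := by linarith [add_one_le_exp (-u)]
  -- `exp (-u) = 1 / exp u ≤ 1 / (1 + u) ≤ 1 - u + u ^ 2`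
  have hup : exp (-u) ≤ 1 - u + u ^ 2 := by
    have hinv : exp (-u) * exp u = 1 := by rw [← exp_add, neg_add_cancel, exp_zero]
    nlinarith [add_one_le_exp u, exp_pos (-u)]
  rw [abs_le]
  constructor <;> nlinarith

lemma integral_rpow_zero_left {s c : ℝ} (hs : -1 < s) :
    ∫ t in (0 : ℝ)..c, t ^ s = c ^ (s + 1) / (s + 1) := by
  rw [integral_rpow (Or.inl hs), zero_rpow (by linarith), sub_zero]

lemma abs_integral_rpow_mul_exp_neg_sub_le {a r c : ℝ} (ha : 0 < a) (hr : 0 ≤ r) (hc : 0 ≤ c) :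
    |(∫ t in (0 : ℝ)..c, t ^ (a - 1) * exp (-(r * t))) - (c ^ a / a - r * c ^ (a + 1) / (a + 1))|
      ≤ r ^ 2 * c ^ (a + 2) / (a + 2) := by
  have hint : ∀ s : ℝ, -1 < s → IntervalIntegrable (fun t : ℝ => t ^ s) volume 0 c :=
    fun s hs => intervalIntegral.intervalIntegrable_rpow' hs
  have hf : IntervalIntegrable (fun t : ℝ => t ^ (a - 1) * exp (-(r * t))) volume 0 c :=
    (hint _ (by linarith)).mul_continuousOn (by fun_prop)
  have hg : IntervalIntegrable (fun t : ℝ => t ^ (a - 1) - r * t ^ a) volume 0 c :=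
    (hint _ (by linarith)).sub ((hint _ (by linarith)).const_mul r)
  have hg_eq : ∫ t in (0 : ℝ)..c, (t ^ (a - 1) - r * t ^ a)
      = c ^ a / a - r * c ^ (a + 1) / (a + 1) := by
    rw [intervalIntegral.integral_sub (hint _ (by linarith)) ((hint _ (by linarith)).const_mul r),
      intervalIntegral.integral_const_mul, integral_rpow_zero_left (by linarith),
      integral_rpow_zero_left (by linarith), sub_add_cancel]
    ring
  have hbound : ∀ᵐ t ∂volume.restrict (uIoc (0 : ℝ) c),
      ‖t ^ (a - 1) * exp (-(r * t)) - (t ^ (a - 1) - r * t ^ a)‖ ≤ r ^ 2 * t ^ (a + 1) := by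
    filter_upwards [ae_restrict_mem measurableSet_uIoc] with t ht
    rw [uIoc_of_le hc] at ht
    have ht0 : 0 < t := ht.1
    have hfactor : t ^ (a - 1) * exp (-(r * t)) - (t ^ (a - 1) - r * t ^ a)
        = t ^ (a - 1) * (exp (-(r * t)) - (1 - r * t)) := by
      rw [show t ^ a = t ^ (a - 1) * t by rw [← rpow_add_one ht0.ne', sub_add_cancel]]
      ring
    rw [hfactor, norm_mul, norm_of_nonneg (rpow_nonneg ht0.le _),
      show t ^ (a + 1) = t ^ (a - 1) * t ^ 2 by
        rw [← rpow_two, ← rpow_add ht0]; ring_nf]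
    calc t ^ (a - 1) * |exp (-(r * t)) - (1 - r * t)| ≤ t ^ (a - 1) * (r * t) ^ 2 :=
          mul_le_mul_of_nonneg_left (abs_exp_neg_sub_one_sub_le_sq (by positivity))
            (rpow_nonneg ht0.le _)
      _ = r ^ 2 * (t ^ (a - 1) * t ^ 2) := by ring
  calc |(∫ t in (0 : ℝ)..c, t ^ (a - 1) * exp (-(r * t))) - (c ^ a / a - r * c ^ (a + 1) / (a + 1))|
      = ‖∫ t in (0 : ℝ)..c, (t ^ (a - 1) * exp (-(r * t)) - (t ^ (a - 1) - r * t ^ a))‖ := by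
        rw [intervalIntegral.integral_sub hf hg, hg_eq, norm_eq_abs]
    _ ≤ |∫ t in (0 : ℝ)..c, r ^ 2 * t ^ (a + 1)| :=
        intervalIntegral.norm_integral_le_abs_of_norm_le hbound ((hint _ (by linarith)).const_mul _)
    _ = r ^ 2 * c ^ (a + 2) / (a + 2) := by
        rw [intervalIntegral.integral_const_mul, integral_rpow_zero_left (by linarith),
          show a + 1 + 1 = a + 2 by ring, abs_of_nonneg (by positivity)]
        ring

lemma gammaMeasure_Iio_toReal {a r c : ℝ} (ha : 0 < a) (hr : 0 < r) (hc : 0 ≤ c) :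
    (gammaMeasure a r (Iio c)).toReal
      = r ^ a / Gamma a * ∫ t in (0 : ℝ)..c, t ^ (a - 1) * exp (-(r * t)) := by
  have hpdf : gammaPDFReal a r
      = (Ici 0).indicator fun t => r ^ a / Gamma a * (t ^ (a - 1) * exp (-(r * t))) := by
    ext t
    simp only [gammaPDFReal, indicator, mem_Ici, mul_assoc]
  rw [gammaMeasure, withDensity_apply _ measurableSet_Iio]
  change (∫⁻ t in Iio c, ENNReal.ofReal (gammaPDFReal a r t)).toReal = _
  rw [← integral_eq_lintegral_of_nonneg_ae (ae_of_all _ (gammaPDFReal_nonneg ha hr)) (by fun_prop),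
    hpdf, setIntegral_indicator measurableSet_Ici, Iio_inter_Ici, integral_Ico_eq_integral_Ioo,
    ← integral_Ioc_eq_integral_Ioo, ← intervalIntegral.integral_of_le hc,
    intervalIntegral.integral_const_mul]

lemma abs_gammaMeasure_Iio_sub_le {a r c : ℝ} (ha : 0 < a) (hr : 0 < r) (hc : 0 ≤ c) :
    |(gammaMeasure a r (Iio c)).toReal
        - ((r * c) ^ a / Gamma (a + 1) - (r * c) ^ (a + 1) / (Gamma a * (a + 1)))|
      ≤ (r * c) ^ (a + 2) / (Gamma a * (a + 2)) := by
  have hΓ : 0 < Gamma a := Gamma_pos_of_pos ha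
  have hK : 0 < r ^ a / Gamma a := by positivity
  have hexpansion : (r * c) ^ a / Gamma (a + 1) - (r * c) ^ (a + 1) / (Gamma a * (a + 1))
      = r ^ a / Gamma a * (c ^ a / a - r * c ^ (a + 1) / (a + 1)) := by
    rw [Gamma_add_one ha.ne', mul_rpow hr.le hc, mul_rpow hr.le hc, rpow_add_one hr.ne']
    field_simp
  have herror : (r * c) ^ (a + 2) / (Gamma a * (a + 2))
      = r ^ a / Gamma a * (r ^ 2 * c ^ (a + 2) / (a + 2)) := by
    rw [mul_rpow hr.le hc, rpow_add hr, rpow_two]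
    field_simp
  rw [gammaMeasure_Iio_toReal ha hr hc, hexpansion, herror, ← mul_sub, abs_mul, abs_of_pos hK]
  exact mul_le_mul_of_nonneg_left (abs_integral_rpow_mul_exp_neg_sub_le ha hr.le hc) hK.le

section StudentT

variable {Ω : Type*} [MeasurableSpace Ω] {P : Measure Ω} {S Z : Ω → ℝ}

lemma aemeasurable_of_map_mul_sq_eq_gammaMeasure {ν : ℝ} (hν : 0 < ν) (hS : ∀ ω, 0 < S ω)
    (hchi : P.map (fun ω => ν * S ω ^ 2) = gammaMeasure (ν / 2) (1 / 2)) :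
    AEMeasurable (fun ω => ν * S ω ^ 2) P ∧ AEMeasurable S P := by
  have : IsProbabilityMeasure (gammaMeasure (ν / 2) (1 / 2)) :=
    isProbabilityMeasure_gammaMeasure (by positivity) one_half_pos
  have hsq : AEMeasurable (fun ω => ν * S ω ^ 2) P :=
    aemeasurable_of_map_neZero (by rw [hchi]; infer_instance)
  refine ⟨hsq, (hsq.div_const ν).sqrt.congr (ae_of_all _ fun ω => ?_)⟩
  simp only [mul_div_cancel_left₀ _ hν.ne', sqrt_sq (hS ω).le]

lemma abs_measure_lt_sub_le_of_map_eq_gammaMeasure {ν : ℝ} (hν : 0 < ν) (hS : ∀ ω, 0 < S ω)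
    (hchi : P.map (fun ω => ν * S ω ^ 2) = gammaMeasure (ν / 2) (1 / 2)) (y : ℝ) :
    |(P {ω | S ω < y}).toReal
        - ((ν / 2) ^ (ν / 2) / Gamma (ν / 2 + 1) * max y 0 ^ ν
          - (ν / 2) ^ (ν / 2) / Gamma (ν / 2 + 1) * ((ν / 2) ^ 2 / (ν / 2 + 1)) * max y 0 ^ (ν + 2))|
      ≤ (ν / 2) ^ (ν / 2 + 2) / (Gamma (ν / 2) * (ν / 2 + 2)) * max y 0 ^ (ν + 4) := by
  rcases le_or_gt y 0 with hy | hy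
  · have hempty : {ω | S ω < y} = ∅ :=
      eq_empty_of_forall_notMem fun ω (hω : S ω < y) => (hS ω).not_ge (hω.le.trans hy)
    simp [hempty, max_eq_right hy, zero_rpow hν.ne', zero_rpow (by linarith : ν + 2 ≠ 0),
      zero_rpow (by linarith : ν + 4 ≠ 0)]
  have hset : {ω | S ω < y} = (fun ω => ν * S ω ^ 2) ⁻¹' Iio (ν * y ^ 2) := by
    ext ω
    simp only [mem_ofPred_eq, mem_preimage, mem_Iio, mul_lt_mul_iff_right₀ hν,
      pow_lt_pow_iff_left₀ (hS ω).le hy.le two_ne_zero]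
  have hpow : ∀ e : ℝ, (1 / 2 * (ν * y ^ 2)) ^ e = (ν / 2) ^ e * y ^ (2 * e) := by
    intro e
    rw [show 1 / 2 * (ν * y ^ 2) = ν / 2 * y ^ 2 by ring, mul_rpow (by positivity) (sq_nonneg y),
      ← rpow_natCast, ← rpow_mul hy.le, Nat.cast_ofNat]
  have hgamma := abs_gammaMeasure_Iio_sub_le (a := ν / 2) (by positivity) one_half_pos
    (by positivity : 0 ≤ ν * y ^ 2)
  rw [hpow, hpow, hpow, ← hchi,
    Measure.map_apply_of_aemeasurable (aemeasurable_of_map_mul_sq_eq_gammaMeasure hν hS hchi).1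
      measurableSet_Iio, ← hset, show 2 * (ν / 2) = ν by ring,
      show 2 * (ν / 2 + 1) = ν + 2 by ring, show 2 * (ν / 2 + 2) = ν + 4 by ring] at hgamma
  rw [max_eq_left hy.le]
  convert hgamma using 3
  · rw [Gamma_add_one (by positivity), rpow_add_one (by positivity)]
    field_simp
  · ring

lemma measurable_measure_setOf_lt (P : Measure Ω) (S : Ω → ℝ) :
    Measurable fun y => P {ω | S ω < y} :=
  Monotone.measurable fun _ _ hy => measure_mono fun _ (hω : _ < _) => hω.trans_le hy

lemma measure_inv_mul_gt_toReal_eq_integral [IsFiniteMeasure P] (hS : ∀ ω, 0 < S ω)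
    (hSm : AEMeasurable S P) (hZm : AEMeasurable Z P) (hindep : IndepFun S Z P) {x : ℝ}
    (hx : 0 < x) :
    (P {ω | (S ω)⁻¹ * Z ω > x}).toReal = ∫ z, (P {ω | S ω < z / x}).toReal ∂(P.map Z) := by
  have hT : MeasurableSet {p : ℝ × ℝ | x * p.2 < p.1} :=
    measurableSet_lt (measurable_snd.const_mul x) measurable_fst
  have hevent : {ω | (S ω)⁻¹ * Z ω > x} = (fun ω => (Z ω, S ω)) ⁻¹' {p | x * p.2 < p.1} := by
    ext ω
    rw [mem_ofPred_eq, gt_iff_lt, inv_mul_eq_div, lt_div_iff₀ (hS ω)]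
    rfl
  have hsection : ∀ z, Prod.mk z ⁻¹' {p : ℝ × ℝ | x * p.2 < p.1} = Iio (z / x) := by
    intro z
    ext s
    rw [mem_preimage, mem_ofPred_eq, mem_Iio, lt_div_iff₀ hx, mul_comm]
  have hlaw : ∀ z, P.map S (Iio (z / x)) = P {ω | S ω < z / x} := fun z =>
    Measure.map_apply_of_aemeasurable hSm measurableSet_Iio
  rw [hevent, ← Measure.map_apply_of_aemeasurable (hZm.prodMk hSm) hT,
    (indepFun_iff_map_prod_eq_prod_map_map hZm hSm).mp hindep.symm, Measure.prod_apply hT]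
  simp_rw [hsection, hlaw]
  exact (integral_toReal
    ((measurable_measure_setOf_lt P S).comp (measurable_id.div_const x)).aemeasurable
    (ae_of_all _ fun _ => measure_lt_top P _)).symm

end StudentT

lemma max_div_zero_rpow {x : ℝ} (hx : 0 < x) (z p : ℝ) :
    max (z / x) 0 ^ p = x ^ (-p) * max z 0 ^ p := by
  have hmax : max (z / x) 0 = max z 0 / x := by simpa using max_div_div_right hx.le z 0
  rw [hmax, div_rpow (le_max_right _ _) hx.le, rpow_neg hx.le]
  ring

lemma isBigO_integral_comp_div_sub {μ : Measure ℝ} {F : ℝ → ℝ} {A B C p q s : ℝ}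
    (hF : Measurable F) (hp : Integrable (fun z => max z 0 ^ p) μ)
    (hq : Integrable (fun z => max z 0 ^ q) μ) (hs : Integrable (fun z => max z 0 ^ s) μ)
    (hFexp : ∀ y, |F y - (A * max y 0 ^ p - B * max y 0 ^ q)| ≤ C * max y 0 ^ s) :
    (fun x => ∫ z, F (z / x) ∂μ
        - (A * x ^ (-p) * ∫ z, max z 0 ^ p ∂μ - B * x ^ (-q) * ∫ z, max z 0 ^ q ∂μ))
      =O[atTop] fun x => x ^ (-s) := by
  refine isBigO_iff.mpr ⟨C * ∫ z, max z 0 ^ s ∂μ, ?_⟩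
  filter_upwards [eventually_gt_atTop 0] with x hx
  set e : ℝ → ℝ := fun z => A * x ^ (-p) * max z 0 ^ p - B * x ^ (-q) * max z 0 ^ q with he_def
  have he : Integrable e μ := (hp.const_mul _).sub (hq.const_mul _)
  have hpointwise : ∀ z, ‖F (z / x) - e z‖ ≤ C * x ^ (-s) * max z 0 ^ s := by
    intro z
    rw [norm_eq_abs]
    simpa only [max_div_zero_rpow hx, ← mul_assoc] using hFexp (z / x)
  have hdiff : Integrable (fun z => F (z / x) - e z) μ :=
    (hs.const_mul _).mono' ((hF.comp (measurable_id.div_const x)).aestronglyMeasurable.sub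
      he.aestronglyMeasurable) (ae_of_all _ hpointwise)
  have hFx : Integrable (fun z => F (z / x)) μ :=
    (hdiff.add he).congr (ae_of_all _ fun z => sub_add_cancel (F (z / x)) (e z))
  calc ‖∫ z, F (z / x) ∂μ
        - (A * x ^ (-p) * ∫ z, max z 0 ^ p ∂μ - B * x ^ (-q) * ∫ z, max z 0 ^ q ∂μ)‖
      = ‖∫ z, (F (z / x) - e z) ∂μ‖ := by
        rw [integral_sub hFx he, he_def, integral_sub (hp.const_mul _) (hq.const_mul _),
          integral_const_mul, integral_const_mul]
    _ ≤ ∫ z, C * x ^ (-s) * max z 0 ^ s ∂μ :=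
        norm_integral_le_of_norm_le (hs.const_mul _) (ae_of_all _ hpointwise)
    _ = C * (∫ z, max z 0 ^ s ∂μ) * ‖x ^ (-s)‖ := by
        rw [integral_const_mul, norm_of_nonneg (rpow_nonneg hx.le _)]
        ring

lemma integrable_max_zero_rpow_gaussianReal (m : ℝ) (v : NNReal) {p : ℝ} (hp : 0 ≤ p) :
    Integrable (fun z => max z 0 ^ p) (gaussianReal m v) := by
  have habs : Integrable (fun z => ‖z‖ ^ p) (gaussianReal m v) := by
    simpa [ENNReal.toReal_ofReal hp] using (memLp_id_gaussianReal' (μ := m) (v := v)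
      (ENNReal.ofReal p) ENNReal.ofReal_ne_top).integrable_norm_rpow'
  refine habs.mono' (by fun_prop) (ae_of_all _ fun z => ?_)
  rw [norm_of_nonneg (rpow_nonneg (le_max_right _ _) _)]
  exact rpow_le_rpow (le_max_right _ _) (max_le (le_abs_self z) (abs_nonneg z)) hp

theorem t_tail_expansion
    {Ω : Type*} [MeasurableSpace Ω] (P : Measure Ω) [IsProbabilityMeasure P]
    (ν : ℝ) (hν : 0 < ν)
    (S Z : Ω → ℝ) (hS : ∀ ω, 0 < S ω)
    (hchi : Measure.map (fun ω => ν * S ω ^ 2) P = gammaMeasure (ν / 2) (1 / 2))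
    (hZ : Measure.map Z P = gaussianReal 0 1)
    (hindep : IndepFun S Z P) :
    (fun x : ℝ =>
        (P {ω | (S ω)⁻¹ * Z ω > x}).toReal -
          (ν / 2) ^ (ν / 2) / Real.Gamma (ν / 2 + 1) * x ^ (-ν) *
            ((∫ ω, max (Z ω) 0 ^ ν ∂P) -
              (ν / 2) ^ 2 / (ν / 2 + 1) * x ^ (-2 : ℝ) *
                ∫ ω, max (Z ω) 0 ^ (ν + 2) ∂P))
      =O[Filter.atTop] (fun x : ℝ => x ^ (-ν - 4)) := by
  have hSm := (aemeasurable_of_map_mul_sq_eq_gammaMeasure hν hS hchi).2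
  have hZm : AEMeasurable Z P := aemeasurable_of_map_neZero (by rw [hZ]; infer_instance)
  have hmoment : ∀ p : ℝ, ∫ ω, max (Z ω) 0 ^ p ∂P = ∫ z, max z 0 ^ p ∂(P.map Z) := fun p =>
    (integral_map hZm
      ((measurable_id.max measurable_const).pow_const p).aestronglyMeasurable).symm
  have hbigO := isBigO_integral_comp_div_sub ((measurable_measure_setOf_lt P S).ennreal_toReal)
    (integrable_max_zero_rpow_gaussianReal 0 1 hν.le)
    (integrable_max_zero_rpow_gaussianReal 0 1 (by linarith : 0 ≤ ν + 2))
    (integrable_max_zero_rpow_gaussianReal 0 1 (by linarith : 0 ≤ ν + 4))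
    (abs_measure_lt_sub_le_of_map_eq_gammaMeasure hν hS hchi)
  refine hbigO.congr' ?_ (.of_forall fun x => by rw [neg_add', sub_eq_add_neg])
  filter_upwards [eventually_gt_atTop 0] with x hx
  rw [measure_inv_mul_gt_toReal_eq_integral hS hSm hZm hindep hx, hmoment, hmoment, ← hZ,
    show -(ν + 2) = -ν + -2 by ring, rpow_add hx]
  ring
end

section
/- For ν > 0, the upper tail of the Student t-distribution with ν degrees of freedom satisfies 1 - t_ν(x) ~ a_ν E[Z₊^ν] x^{-ν} as x → ∞, where a_ν = (ν/2)^{ν/2}/Γ(ν/2+1) and E[Z₊^ν] = 2^{ν/2-1}Γ((ν+1)/2)/√π. Consequently the quantile function satisfies t_ν^{-1}(1-u) ~ (a_ν E[Z₊^ν])^{1/ν} u^{-1/ν} as u ↓ 0. -/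
/-!
Conditioning on `S`, the tail is `P(Z / S > x) = E[G(Z / x)]` with `G t = P(S < t)`. Because
`ν S²` has the Gamma`(ν/2, 1/2)` law, `e^{-ν t²/2} a_ν t^ν ≤ G t ≤ a_ν t^ν` for `t > 0`, so
`x^ν G(Z / x) → a_ν Z₊^ν` with the integrable majorant `a_ν Z₊^ν`; dominated convergence (Breiman's
lemma) gives `x^ν (1 - t_ν(x)) → a_ν E[Z₊^ν]`. For the quantile, if `T` is nonincreasing with
`x^ν T x → K > 0` and `q u = sInf {x | T x ≤ u}`, then `T (q u + 1) ≤ u < T (q u - 1)` and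
`q u → ∞`, which squeezes `u (q u)^ν → K`.
-/

open MeasureTheory ProbabilityTheory Real Filter Set Topology

namespace ProbabilityTheory

variable {a r y : ℝ}

lemma lintegral_Ioo_ofReal_mul_rpow_sub_one {c : ℝ} (hc : 0 ≤ c) (ha : 0 < a) (hy : 0 < y) :
    ∫⁻ x in Ioo 0 y, ENNReal.ofReal (c * x ^ (a - 1)) = ENNReal.ofReal (c * (y ^ a / a)) := by
  have hint : IntegrableOn (fun x : ℝ => x ^ (a - 1)) (Ioo 0 y) :=
    (intervalIntegral.intervalIntegrable_rpow' (by linarith)).1.mono_set Ioo_subset_Ioc_self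
  rw [← ofReal_integral_eq_lintegral_ofReal (hint.const_mul c), integral_const_mul,
    ← integral_Ioc_eq_integral_Ioo, ← intervalIntegral.integral_of_le hy.le,
    integral_rpow (Or.inl (by linarith)), sub_add_cancel, zero_rpow ha.ne', sub_zero]
  exact (ae_restrict_iff' measurableSet_Ioo).mpr
    (ae_of_all _ fun x hx => mul_nonneg hc (rpow_nonneg hx.1.le _))

lemma gammaMeasure_Iio_eq_lintegral (ha : 0 < a) (hr : 0 ≤ r) (hy : 0 ≤ y) :
    gammaMeasure a r (Iio y) = ∫⁻ x in Ioo 0 y,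
      ENNReal.ofReal (r ^ a / Gamma a * x ^ (a - 1)) * ENNReal.ofReal (exp (-(r * x))) := by
  rw [gammaMeasure, withDensity_apply _ measurableSet_Iio, ← Iio_union_Ico_eq_Iio hy,
    lintegral_union measurableSet_Ico ((Iio_disjoint_Ici le_rfl).mono_right Ico_subset_Ici_self),
    setLIntegral_congr_fun measurableSet_Iio (fun x (hx : x < 0) => gammaPDF_of_neg hx),
    lintegral_zero, zero_add, setLIntegral_congr Ioo_ae_eq_Ico.symm]
  refine setLIntegral_congr_fun measurableSet_Ioo fun x hx => ?_
  have := Gamma_pos_of_pos ha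
  have := rpow_nonneg hr a
  have := rpow_nonneg hx.1.le (a - 1)
  rw [gammaPDF_of_nonneg hx.1.le, ENNReal.ofReal_mul (by positivity)]

lemma gammaMeasure_Iio_le (ha : 0 < a) (hr : 0 ≤ r) (hy : 0 < y) :
    gammaMeasure a r (Iio y) ≤ ENNReal.ofReal (r ^ a / Gamma (a + 1) * y ^ a) := by
  have hC : 0 ≤ r ^ a / Gamma a := div_nonneg (rpow_nonneg hr a) (Gamma_pos_of_pos ha).le
  calc gammaMeasure a r (Iio y)
      ≤ ∫⁻ x in Ioo 0 y, ENNReal.ofReal (r ^ a / Gamma a * x ^ (a - 1)) := by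
        rw [gammaMeasure_Iio_eq_lintegral ha hr hy.le]
        refine setLIntegral_mono' measurableSet_Ioo fun x hx => mul_le_of_le_one_right' ?_
        exact ENNReal.ofReal_le_one.mpr (exp_le_one_iff.mpr (by nlinarith [hx.1]))
    _ = ENNReal.ofReal (r ^ a / Gamma (a + 1) * y ^ a) := by
        rw [lintegral_Ioo_ofReal_mul_rpow_sub_one hC ha hy, Gamma_add_one ha.ne']
        congr 1
        field_simp

lemma gammaMeasure_real_Iio_le (ha : 0 < a) (hr : 0 ≤ r) (hy : 0 < y) :
    (gammaMeasure a r).real (Iio y) ≤ r ^ a / Gamma (a + 1) * y ^ a := by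
  have := Gamma_pos_of_pos (show 0 < a + 1 by linarith)
  have := rpow_nonneg hr a
  have := rpow_nonneg hy.le a
  exact ENNReal.toReal_le_of_le_ofReal (by positivity) (gammaMeasure_Iio_le ha hr hy)

lemma le_gammaMeasure_real_Iio (ha : 0 < a) (hr : 0 ≤ r) (hy : 0 < y) :
    exp (-(r * y)) * (r ^ a / Gamma (a + 1) * y ^ a) ≤ (gammaMeasure a r).real (Iio y) := by
  have hC : 0 ≤ r ^ a / Gamma a := div_nonneg (rpow_nonneg hr a) (Gamma_pos_of_pos ha).le
  refine (ENNReal.ofReal_le_iff_le_toReal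
    ((gammaMeasure_Iio_le ha hr hy).trans_lt ENNReal.ofReal_lt_top).ne).mp ?_
  calc ENNReal.ofReal (exp (-(r * y)) * (r ^ a / Gamma (a + 1) * y ^ a))
      = (∫⁻ x in Ioo 0 y, ENNReal.ofReal (r ^ a / Gamma a * x ^ (a - 1))) *
          ENNReal.ofReal (exp (-(r * y))) := by
        rw [lintegral_Ioo_ofReal_mul_rpow_sub_one hC ha hy, ← ENNReal.ofReal_mul (by positivity),
          Gamma_add_one ha.ne']
        congr 1
        field_simp
    _ ≤ gammaMeasure a r (Iio y) := by
        rw [gammaMeasure_Iio_eq_lintegral ha hr hy.le,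
          ← lintegral_mul_const' _ _ ENNReal.ofReal_ne_top]
        refine setLIntegral_mono' measurableSet_Ioo fun x hx => mul_le_mul_right ?_ _
        exact ENNReal.ofReal_le_ofReal (exp_le_exp.mpr (by nlinarith [hx.2]))

lemma integrable_max_zero_rpow_gaussianReal {ν : ℝ} (hν : 0 < ν) :
    Integrable (fun z : ℝ => max z 0 ^ ν) (gaussianReal 0 1) := by
  have hLp := memLp_id_gaussianReal' (μ := 0) (v := 1) (ENNReal.ofReal ν) ENNReal.ofReal_ne_top
  refine (hLp.integrable_norm_rpow (by simpa using hν) ENNReal.ofReal_ne_top).mono'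
    ((measurable_id.max measurable_const).pow_const ν).aestronglyMeasurable
    (ae_of_all _ fun z => ?_)
  rw [ENNReal.toReal_ofReal hν.le, id, norm_eq_abs, norm_eq_abs,
    abs_of_nonneg (rpow_nonneg (le_max_right _ _) _)]
  exact rpow_le_rpow (le_max_right _ _) (max_le (le_abs_self z) (abs_nonneg z)) hν.le

lemma integral_max_zero_rpow_gaussianReal {ν : ℝ} (hν : 0 < ν) :
    ∫ z, max z 0 ^ ν ∂(gaussianReal 0 1) = 2 ^ (ν / 2 - 1) * Gamma ((ν + 1) / 2) / √π := by
  have hvanish : ∀ z ∉ Ioi (0 : ℝ), gaussianPDFReal 0 1 z • max z 0 ^ ν = 0 := fun z hz => by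
    rw [max_eq_right (not_lt.mp hz), zero_rpow hν.ne', smul_zero]
  rw [integral_gaussianReal_eq_integral_smul one_ne_zero,
    ← setIntegral_eq_integral_of_forall_compl_eq_zero hvanish]
  calc ∫ z in Ioi (0 : ℝ), gaussianPDFReal 0 1 z • max z 0 ^ ν
      = (√(2 * π))⁻¹ * ∫ z in Ioi (0 : ℝ), z ^ ν * exp (-(1 / 2) * z ^ (2 : ℝ)) := by
        rw [← integral_const_mul]
        refine setIntegral_congr_fun measurableSet_Ioi fun z (hz : 0 < z) => ?_
        rw [gaussianPDFReal_def, max_eq_left hz.le, rpow_two, smul_eq_mul]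
        simp only [NNReal.coe_one, mul_one, sub_zero]
        ring_nf
    _ = 2 ^ (ν / 2 - 1) * Gamma ((ν + 1) / 2) / √π := by
        rw [integral_rpow_mul_exp_neg_mul_rpow two_pos (by linarith) (by norm_num)]
        have h2 : (1 / 2 : ℝ) ^ (-(ν + 1) / 2) = 2 ^ (ν / 2 - 1) * √2 * 2 := by
          rw [one_div, inv_rpow zero_le_two, ← rpow_neg zero_le_two, sqrt_eq_rpow,
            ← rpow_add two_pos, ← rpow_add_one two_ne_zero]
          ring_nf
        rw [h2, sqrt_mul zero_le_two]
        field_simp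

end ProbabilityTheory

section RegularVariation

variable {G : ℝ → ℝ} {ν c : ℝ}

lemma rpow_mul_comp_div_le (hν : 0 < ν) (hG_nonpos : ∀ t ≤ 0, G t = 0)
    (hG_le : ∀ t, 0 < t → G t ≤ c * t ^ ν) {x : ℝ} (hx : 0 < x) (z : ℝ) :
    x ^ ν * G (z / x) ≤ c * max z 0 ^ ν := by
  rcases le_or_gt z 0 with hz | hz
  · rw [hG_nonpos _ (div_nonpos_of_nonpos_of_nonneg hz hx.le), max_eq_right hz,
      zero_rpow hν.ne']
    simp
  · calc x ^ ν * G (z / x) ≤ x ^ ν * (c * (z / x) ^ ν) :=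
          mul_le_mul_of_nonneg_left (hG_le _ (div_pos hz hx)) (rpow_nonneg hx.le ν)
      _ = c * max z 0 ^ ν := by
          rw [max_eq_left hz.le, div_rpow hz.le hx.le]
          field_simp [(rpow_pos_of_pos hx ν).ne']

lemma tendsto_rpow_mul_comp_div (hν : 0 < ν) (hG_nonpos : ∀ t ≤ 0, G t = 0)
    (hG_lim : Tendsto (fun t => G t / t ^ ν) (𝓝[>] 0) (𝓝 c)) (z : ℝ) :
    Tendsto (fun x => x ^ ν * G (z / x)) atTop (𝓝 (c * max z 0 ^ ν)) := by
  rcases le_or_gt z 0 with hz | hz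
  · rw [max_eq_right hz, zero_rpow hν.ne', mul_zero]
    refine tendsto_const_nhds.congr' ?_
    filter_upwards [eventually_gt_atTop 0] with x hx
    rw [hG_nonpos _ (div_nonpos_of_nonpos_of_nonneg hz hx.le), mul_zero]
  · have hzx : Tendsto (fun x => z / x) atTop (𝓝[>] 0) :=
      tendsto_nhdsWithin_iff.mpr ⟨tendsto_const_nhds.div_atTop tendsto_id,
        (eventually_gt_atTop 0).mono fun x hx => div_pos hz hx⟩
    rw [max_eq_left hz.le, mul_comm]
    refine ((hG_lim.comp hzx).const_mul (z ^ ν)).congr' ?_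
    filter_upwards [eventually_gt_atTop 0] with x hx
    rw [Function.comp_apply, div_rpow hz.le hx.le]
    field_simp [(rpow_pos_of_pos hx ν).ne', (rpow_pos_of_pos hz ν).ne']

theorem tendsto_rpow_mul_integral_comp_div {μ : Measure ℝ} (hν : 0 < ν) (hGm : Measurable G)
    (hG_nonpos : ∀ t ≤ 0, G t = 0) (hG_nonneg : ∀ t, 0 ≤ G t)
    (hG_le : ∀ t, 0 < t → G t ≤ c * t ^ ν)
    (hG_lim : Tendsto (fun t => G t / t ^ ν) (𝓝[>] 0) (𝓝 c))
    (hint : Integrable (fun z => max z 0 ^ ν) μ) :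
    Tendsto (fun x => x ^ ν * ∫ z, G (z / x) ∂μ) atTop (𝓝 (c * ∫ z, max z 0 ^ ν ∂μ)) := by
  simp_rw [← integral_const_mul]
  refine tendsto_integral_filter_of_dominated_convergence _
    (.of_forall fun x =>
      ((hGm.comp (measurable_id.div_const x)).const_mul _).aestronglyMeasurable)
    ?_ (hint.const_mul c) (ae_of_all _ (tendsto_rpow_mul_comp_div hν hG_nonpos hG_lim))
  filter_upwards [eventually_gt_atTop 0] with x hx
  refine ae_of_all _ fun z => ?_
  rw [norm_of_nonneg (mul_nonneg (rpow_nonneg hx.le ν) (hG_nonneg _))]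
  exact rpow_mul_comp_div_le hν hG_nonpos hG_le hx z

end RegularVariation

section StudentT

variable {Ω : Type*} [MeasurableSpace Ω] {P : Measure Ω} {S Z : Ω → ℝ} {ν : ℝ}

lemma aemeasurable_mul_sq_of_map_eq_gammaMeasure (hν : 0 < ν)
    (hchi : P.map (fun ω => ν * S ω ^ 2) = gammaMeasure (ν / 2) (1 / 2)) :
    AEMeasurable (fun ω => ν * S ω ^ 2) P :=
  have := isProbabilityMeasure_gammaMeasure (half_pos hν) one_half_pos
  aemeasurable_of_map_neZero (by rw [hchi]; infer_instance)

lemma aemeasurable_of_aemeasurable_mul_sq (hS : ∀ ω, 0 ≤ S ω) (hν : ν ≠ 0)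
    (hm : AEMeasurable (fun ω => ν * S ω ^ 2) P) : AEMeasurable S P := by
  have hS_eq : S = fun ω => √(ν * S ω ^ 2 / ν) := funext fun ω => by
    rw [mul_div_cancel_left₀ _ hν, sqrt_sq (hS ω)]
  rw [hS_eq]
  exact (hm.div_const ν).sqrt

lemma measureReal_lt_eq_map_mul_sq (hS : ∀ ω, 0 < S ω) {t : ℝ} (hν : 0 < ν) (ht : 0 < t)
    (hm : AEMeasurable (fun ω => ν * S ω ^ 2) P) :
    P.real {ω | S ω < t} = (P.map fun ω => ν * S ω ^ 2).real (Iio (ν * t ^ 2)) := by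
  rw [map_measureReal_apply_of_aemeasurable hm measurableSet_Iio]
  congr 1
  ext ω
  simp only [mem_ofPred_eq, mem_preimage, mem_Iio, mul_lt_mul_iff_right₀ hν]
  exact (pow_lt_pow_iff_left₀ (hS ω).le ht.le two_ne_zero).symm

lemma half_rpow_div_mul_rpow_mul_sq {t : ℝ} (hν : 0 ≤ ν) (ht : 0 ≤ t) (g : ℝ) :
    (1 / 2 : ℝ) ^ (ν / 2) / g * (ν * t ^ 2) ^ (ν / 2) = (ν / 2) ^ (ν / 2) / g * t ^ ν := by
  have hsq : (t ^ 2) ^ (ν / 2) = t ^ ν := by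
    rw [← rpow_natCast, ← rpow_mul ht]
    congr 1
    ring
  rw [div_mul_eq_mul_div, mul_rpow hν (sq_nonneg t), hsq, ← mul_assoc,
    ← mul_rpow (by norm_num) hν, one_div_mul_eq_div, div_mul_eq_mul_div]

lemma measureReal_lt_eq_gammaMeasure_real (hS : ∀ ω, 0 < S ω) {t : ℝ} (hν : 0 < ν)
    (hchi : P.map (fun ω => ν * S ω ^ 2) = gammaMeasure (ν / 2) (1 / 2)) (ht : 0 < t) :
    P.real {ω | S ω < t} = (gammaMeasure (ν / 2) (1 / 2)).real (Iio (ν * t ^ 2)) :=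
  hchi ▸ measureReal_lt_eq_map_mul_sq hS hν ht (aemeasurable_mul_sq_of_map_eq_gammaMeasure hν hchi)

lemma measureReal_lt_le_of_map_eq_gammaMeasure (hS : ∀ ω, 0 < S ω) {t : ℝ} (hν : 0 < ν)
    (hchi : P.map (fun ω => ν * S ω ^ 2) = gammaMeasure (ν / 2) (1 / 2)) (ht : 0 < t) :
    P.real {ω | S ω < t} ≤ (ν / 2) ^ (ν / 2) / Gamma (ν / 2 + 1) * t ^ ν := by
  rw [measureReal_lt_eq_gammaMeasure_real hS hν hchi ht,
    ← half_rpow_div_mul_rpow_mul_sq hν.le ht.le]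
  exact gammaMeasure_real_Iio_le (half_pos hν) one_half_pos.le (by positivity)

lemma tendsto_measureReal_lt_div_rpow_of_map_eq_gammaMeasure (hS : ∀ ω, 0 < S ω)
    (hν : 0 < ν) (hchi : P.map (fun ω => ν * S ω ^ 2) = gammaMeasure (ν / 2) (1 / 2)) :
    Tendsto (fun t => P.real {ω | S ω < t} / t ^ ν) (𝓝[>] 0)
      (𝓝 ((ν / 2) ^ (ν / 2) / Gamma (ν / 2 + 1))) := by
  set c := (ν / 2) ^ (ν / 2) / Gamma (ν / 2 + 1)
  have hexp : Tendsto (fun t : ℝ => exp (-(1 / 2 * (ν * t ^ 2))) * c) (𝓝[>] 0) (𝓝 c) := by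
    have h : Continuous fun t : ℝ => exp (-(1 / 2 * (ν * t ^ 2))) * c := by fun_prop
    simpa using (h.tendsto 0).mono_left nhdsWithin_le_nhds
  refine tendsto_of_tendsto_of_tendsto_of_le_of_le' hexp tendsto_const_nhds ?_ ?_
  · filter_upwards [self_mem_nhdsWithin] with t (ht : 0 < t)
    rw [le_div_iff₀ (rpow_pos_of_pos ht ν), mul_assoc,
      measureReal_lt_eq_gammaMeasure_real hS hν hchi ht,
      ← half_rpow_div_mul_rpow_mul_sq hν.le ht.le]
    exact le_gammaMeasure_real_Iio (half_pos hν) one_half_pos.le (by positivity)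
  · filter_upwards [self_mem_nhdsWithin] with t (ht : 0 < t)
    rw [div_le_iff₀ (rpow_pos_of_pos ht ν)]
    exact measureReal_lt_le_of_map_eq_gammaMeasure hS hν hchi ht

lemma measureReal_lt_inv_mul_eq_integral [IsFiniteMeasure P] (hS : ∀ ω, 0 < S ω)
    (hSm : AEMeasurable S P) (hZm : AEMeasurable Z P) (hind : IndepFun S Z P) {x : ℝ}
    (hx : 0 < x) :
    P.real {ω | x < (S ω)⁻¹ * Z ω} = ∫ z, P.real {ω | S ω < z / x} ∂(P.map Z) := by
  have hA : MeasurableSet {p : ℝ × ℝ | x < p.1⁻¹ * p.2} :=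
    measurableSet_lt measurable_const (measurable_fst.inv.mul measurable_snd)
  have hslice : ∀ z, (P.map S) ((fun s => (s, z)) ⁻¹' {p : ℝ × ℝ | x < p.1⁻¹ * p.2})
      = P {ω | S ω < z / x} := fun z => by
    rw [Measure.map_apply_of_aemeasurable hSm (measurable_prodMk_right hA)]
    congr 1
    ext ω
    simp only [mem_preimage, mem_ofPred_eq, inv_mul_eq_div, lt_div_iff₀ (hS ω), lt_div_iff₀ hx,
      mul_comm x]
  have hmono : Monotone fun z => P {ω | S ω < z / x} := fun z z' h =>
    measure_mono fun ω (hω : S ω < z / x) => hω.trans_le (by gcongr)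
  simp_rw [measureReal_def]
  rw [integral_toReal hmono.measurable.aemeasurable (ae_of_all _ fun _ => measure_lt_top _ _),
    show {ω | x < (S ω)⁻¹ * Z ω} = (fun ω => (S ω, Z ω)) ⁻¹' {p | x < p.1⁻¹ * p.2} from rfl,
    ← Measure.map_apply_of_aemeasurable (hSm.prodMk hZm) hA,
    (indepFun_iff_map_prod_eq_prod_map_map hSm hZm).mp hind, Measure.prod_apply_symm hA]
  simp_rw [hslice]

theorem tendsto_rpow_mul_one_sub_measureReal_inv_mul_le [IsProbabilityMeasure P]
    (hS : ∀ ω, 0 < S ω) (hν : 0 < ν)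
    (hchi : P.map (fun ω => ν * S ω ^ 2) = gammaMeasure (ν / 2) (1 / 2))
    (hZm : AEMeasurable Z P) (hind : IndepFun S Z P)
    (hint : Integrable (fun z => max z 0 ^ ν) (P.map Z)) :
    Tendsto (fun x => x ^ ν * (1 - P.real {ω | (S ω)⁻¹ * Z ω ≤ x})) atTop
      (𝓝 ((ν / 2) ^ (ν / 2) / Gamma (ν / 2 + 1) * ∫ z, max z 0 ^ ν ∂(P.map Z))) := by
  have hSm := aemeasurable_of_aemeasurable_mul_sq (fun ω => (hS ω).le) hν.ne'
    (aemeasurable_mul_sq_of_map_eq_gammaMeasure hν hchi)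
  have hG_mono : Monotone fun t => P.real {ω | S ω < t} := fun t t' h =>
    measureReal_mono fun ω (hω : S ω < t) => hω.trans_le h
  refine (tendsto_rpow_mul_integral_comp_div hν hG_mono.measurable
    (fun t ht => by simp [fun ω => not_lt.mpr (ht.trans (hS ω).le)])
    (fun _ => measureReal_nonneg) (fun t => measureReal_lt_le_of_map_eq_gammaMeasure hS hν hchi)
    (tendsto_measureReal_lt_div_rpow_of_map_eq_gammaMeasure hS hν hchi) hint).congr' ?_
  filter_upwards [eventually_gt_atTop 0] with x hx
  have hnull : NullMeasurableSet {ω | (S ω)⁻¹ * Z ω ≤ x} P :=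
    (hSm.inv.mul hZm).nullMeasurable measurableSet_Iic
  rw [← probReal_compl_eq_one_sub₀ hnull, compl_ofPred]
  simp only [not_le]
  rw [measureReal_lt_inv_mul_eq_integral hS hSm hZm hind hx]

end StudentT

section TailInversion

variable {T : ℝ → ℝ} {ν K : ℝ}

lemma apply_sInf_add_le (hT : Antitone T) {u ε : ℝ} (hε : 0 < ε)
    (hne : {x | T x ≤ u}.Nonempty) (hbdd : BddBelow {x | T x ≤ u}) :
    T (sInf {x | T x ≤ u} + ε) ≤ u := by
  obtain ⟨x, hx, hlt⟩ := (csInf_lt_iff hbdd hne).mp (lt_add_of_pos_right _ hε)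
  exact (hT hlt.le).trans hx

lemma lt_apply_sInf_sub {u ε : ℝ} (hε : 0 < ε) (hbdd : BddBelow {x | T x ≤ u}) :
    u < T (sInf {x | T x ≤ u} - ε) := by
  by_contra! h
  linarith [csInf_le hbdd h]

lemma tendsto_rpow_mul_comp_add_const (hlim : Tendsto (fun x => x ^ ν * T x) atTop (𝓝 K))
    (a : ℝ) : Tendsto (fun x => x ^ ν * T (x + a)) atTop (𝓝 K) := by
  have hratio : Tendsto (fun x => (x / (x + a)) ^ ν) atTop (𝓝 1) := by
    have h : Tendsto (fun x : ℝ => (1 + a * x⁻¹)⁻¹) atTop (𝓝 1) := by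
      simpa using ((tendsto_inv_atTop_zero.const_mul a).const_add 1).inv₀ (by simp)
    refine (one_rpow ν ▸ h.rpow_const (Or.inl one_ne_zero)).congr' ?_
    filter_upwards [eventually_gt_atTop 0] with x hx
    congr 1
    field_simp
  simpa using (hratio.mul (hlim.comp (tendsto_atTop_add_const_right _ a tendsto_id))).congr' <| by
    filter_upwards [eventually_gt_atTop 0, eventually_gt_atTop (-a)] with x hx hxa
    simp only [Function.comp_apply, id_eq]
    rw [div_rpow hx.le (by linarith)]
    field_simp [(rpow_pos_of_pos (show 0 < x + a by linarith) ν).ne']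

lemma pos_of_tendsto_rpow_mul (hK : 0 < K) (hT : Antitone T)
    (hlim : Tendsto (fun x => x ^ ν * T x) atTop (𝓝 K)) (x : ℝ) : 0 < T x := by
  obtain ⟨y, hxy, hy, hyT⟩ :=
    ((eventually_ge_atTop x).and
      ((eventually_gt_atTop 0).and (hlim.eventually_const_lt hK))).exists
  exact (pos_of_mul_pos_right hyT (rpow_nonneg hy.le ν)).trans_le (hT hxy)

lemma tendsto_zero_of_tendsto_rpow_mul (hν : 0 < ν)
    (hlim : Tendsto (fun x => x ^ ν * T x) atTop (𝓝 K)) : Tendsto T atTop (𝓝 0) := by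
  simpa using (hlim.mul (tendsto_rpow_neg_atTop hν)).congr' <| by
    filter_upwards [eventually_gt_atTop 0] with x hx
    rw [rpow_neg hx.le]
    field_simp [(rpow_pos_of_pos hx ν).ne']

lemma bddBelow_setOf_apply_le (hT : Antitone T) {u a : ℝ} (hu : u < T a) :
    BddBelow {x | T x ≤ u} :=
  ⟨a, fun _ hx => not_lt.mp fun h => (hx.trans_lt hu).not_ge (hT h.le)⟩

lemma eventually_setOf_apply_le (hν : 0 < ν) (hK : 0 < K) (hT : Antitone T)
    (hlim : Tendsto (fun x => x ^ ν * T x) atTop (𝓝 K)) :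
    ∀ᶠ u in 𝓝[>] 0, {x | T x ≤ u}.Nonempty ∧ BddBelow {x | T x ≤ u} := by
  filter_upwards [Ioo_mem_nhdsGT (pos_of_tendsto_rpow_mul hK hT hlim 0)] with u ⟨hu, hu0⟩
  exact ⟨((tendsto_zero_of_tendsto_rpow_mul hν hlim).eventually_le_const hu).exists,
    bddBelow_setOf_apply_le hT hu0⟩

lemma tendsto_sInf_atTop (hν : 0 < ν) (hK : 0 < K) (hT : Antitone T)
    (hlim : Tendsto (fun x => x ^ ν * T x) atTop (𝓝 K)) :
    Tendsto (fun u => sInf {x | T x ≤ u}) (𝓝[>] 0) atTop := by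
  refine tendsto_atTop.mpr fun M => ?_
  filter_upwards [eventually_setOf_apply_le hν hK hT hlim,
    Ioo_mem_nhdsGT (pos_of_tendsto_rpow_mul hK hT hlim (M + 1))] with u ⟨hne, hbdd⟩ ⟨_, huM⟩
  have := hT.reflect_lt ((apply_sInf_add_le hT one_pos hne hbdd).trans_lt huM)
  linarith

lemma tendsto_mul_rpow_sInf (hν : 0 < ν) (hK : 0 < K) (hT : Antitone T)
    (hlim : Tendsto (fun x => x ^ ν * T x) atTop (𝓝 K)) :
    Tendsto (fun u => u * sInf {x | T x ≤ u} ^ ν) (𝓝[>] 0) (𝓝 K) := by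
  have hq := tendsto_sInf_atTop hν hK hT hlim
  refine tendsto_of_tendsto_of_tendsto_of_le_of_le'
    ((tendsto_rpow_mul_comp_add_const hlim 1).comp hq)
    ((tendsto_rpow_mul_comp_add_const hlim (-1)).comp hq) ?_ ?_
  · filter_upwards [eventually_setOf_apply_le hν hK hT hlim, hq.eventually_ge_atTop 0]
      with u ⟨hne, hbdd⟩ hq0
    rw [Function.comp_apply, mul_comm u]
    exact mul_le_mul_of_nonneg_left (apply_sInf_add_le hT one_pos hne hbdd) (rpow_nonneg hq0 ν)
  · filter_upwards [eventually_setOf_apply_le hν hK hT hlim, hq.eventually_ge_atTop 0]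
      with u ⟨_, hbdd⟩ hq0
    rw [Function.comp_apply, mul_comm u, ← sub_eq_add_neg]
    exact mul_le_mul_of_nonneg_left (lt_apply_sInf_sub one_pos hbdd).le (rpow_nonneg hq0 ν)

theorem tendsto_sInf_div_rpow (hν : 0 < ν) (hK : 0 < K) (hT : Antitone T)
    (hlim : Tendsto (fun x => x ^ ν * T x) atTop (𝓝 K)) :
    Tendsto (fun u => sInf {x | T x ≤ u} / (K ^ (1 / ν) * u ^ (-1 / ν))) (𝓝[>] 0) (𝓝 1) := by
  have h := ((tendsto_mul_rpow_sInf hν hK hT hlim).div_const K).rpow_const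
    (p := 1 / ν) (Or.inr (by positivity))
  rw [div_self hK.ne', one_rpow] at h
  refine h.congr' ?_
  filter_upwards [self_mem_nhdsWithin, (tendsto_sInf_atTop hν hK hT hlim).eventually_gt_atTop 0]
    with u (hu : 0 < u) hq
  rw [div_rpow (by positivity) hK.le, mul_rpow hu.le (by positivity), ← rpow_mul hq.le,
    mul_one_div_cancel hν.ne', rpow_one, neg_div, rpow_neg hu.le]
  field_simp

lemma tendsto_div_mul_rpow_neg (hK : K ≠ 0)
    (hlim : Tendsto (fun x => x ^ ν * T x) atTop (𝓝 K)) :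
    Tendsto (fun x => T x / (K * x ^ (-ν))) atTop (𝓝 1) := by
  refine (div_self hK ▸ hlim.div_const K).congr' ?_
  filter_upwards [eventually_gt_atTop 0] with x hx
  rw [rpow_neg hx.le]
  field_simp

end TailInversion

theorem t_tail_and_quantile_asymptotics
    {Ω : Type*} [MeasurableSpace Ω] (P : Measure Ω) [IsProbabilityMeasure P]
    (ν : ℝ) (hν : 0 < ν)
    (S Z : Ω → ℝ) (hS : ∀ ω, 0 < S ω)
    (hchi : Measure.map (fun ω => ν * S ω ^ 2) P = gammaMeasure (ν / 2) (1 / 2))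
    (hZ : Measure.map Z P = gaussianReal 0 1)
    (hindep : IndepFun S Z P)
    (F : ℝ → ℝ)
    (hF : F = fun x => (P {ω | (S ω)⁻¹ * Z ω ≤ x}).toReal)
    (q : ℝ → ℝ)
    (hq : q = fun u => sInf {x : ℝ | 1 - u ≤ F x})
    (K : ℝ)
    (hK : K = (ν / 2) ^ (ν / 2) / Real.Gamma (ν / 2 + 1) *
      (2 ^ (ν / 2 - 1) * Real.Gamma ((ν + 1) / 2) / Real.sqrt Real.pi)) :
    Filter.Tendsto (fun x : ℝ => (1 - F x) / (K * x ^ (-ν))) Filter.atTop (nhds 1) ∧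
    Filter.Tendsto (fun u : ℝ => q u / (K ^ (1 / ν) * u ^ (-1 / ν)))
      (nhdsWithin 0 (Set.Ioi 0)) (nhds 1) := by
  have hK_pos : 0 < K := by
    have := Gamma_pos_of_pos (show 0 < ν / 2 + 1 by linarith)
    have := Gamma_pos_of_pos (show 0 < (ν + 1) / 2 by linarith)
    rw [hK]
    positivity
  have hZm : AEMeasurable Z P := aemeasurable_of_map_neZero (by rw [hZ]; infer_instance)
  have hmain : Tendsto (fun x => x ^ ν * (1 - F x)) atTop (𝓝 K) := by
    rw [hF, hK, ← integral_max_zero_rpow_gaussianReal hν, ← hZ]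
    exact tendsto_rpow_mul_one_sub_measureReal_inv_mul_le hS hν hchi hZm hindep
      (hZ ▸ integrable_max_zero_rpow_gaussianReal hν)
  have hF_mono : Monotone F :=
    hF ▸ fun x y h => measureReal_mono fun ω (hω : _ ≤ x) => hω.trans h
  refine ⟨tendsto_div_mul_rpow_neg hK_pos.ne' hmain, ?_⟩
  have hset : ∀ u, {x | 1 - u ≤ F x} = {x | 1 - F x ≤ u} := fun u => by
    simp only [sub_le_comm]
  simp only [hq, hset]
  exact tendsto_sInf_div_rpow hν hK_pos (fun x y h => sub_le_sub_left (hF_mono h) 1) hmain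
end

section
/- Let X, Z, ρ be independent, X and Z standard normal, ρ taking values in (-1,1) with essential supremum 1 (i.e., P(ρ > ρ₀) > 0 for every ρ₀ < 1). Set Y = ρX + √(1-ρ²) Z and let C(u,u) = P(X ≤ Φ^{-1}(u), Y ≤ Φ^{-1}(u)) be the diagonal of the copula of (X,Y). Then for every ε > 0, lim_{u↓0} u^{-1-ε} C(u,u) = ∞; equivalently the Ledford–Tawn index η = lim_{u↓0} log u / log C(u,u) equals 1. -/
/-!
Write `q = Φ⁻¹(u)`. On the event `{ρ > ρ₀, Z ≤ 0, X ≤ q / ρ₀}` both `X ≤ q` and `Y ≤ q`, so by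
independence `C(u) ≥ c · Φ(q / ρ₀)` with `c = Φ(0) P(ρ > ρ₀) > 0`. The Gaussian tail bounds
`φ(x - 1) ≤ Φ(x) ≤ exp (-x² / 2)` for `x ≤ 0` then give
`u ^ (-1 - ε) C(u) ≳ exp (((1 + ε) - ρ₀⁻²) q² / 2 + O(q))`, which tends to infinity as `q → -∞`
once `ρ₀⁻² < 1 + ε`. Together with `C(u) ≤ u` this traps `log C(u) / log u` in `[1, 1 + ε]`.
-/

open MeasureTheory ProbabilityTheory Real Filter Set Topology

section Quantile

variable {μ : Measure ℝ}

variable (μ) in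
noncomputable def quantile (u : ℝ) : ℝ := sInf {x | u ≤ cdf μ x}

lemma bddBelow_setOf_le_cdf {u : ℝ} (hu : 0 < u) : BddBelow {x | u ≤ cdf μ x} := by
  obtain ⟨b, hb⟩ := eventually_atBot.1 ((tendsto_cdf_atBot μ).eventually (eventually_lt_nhds hu))
  exact ⟨b, fun x hx => le_of_not_gt fun hxb => (hb x hxb.le).not_ge hx⟩

lemma quantile_le {u x : ℝ} (hu : 0 < u) (hx : u ≤ cdf μ x) : quantile μ u ≤ x :=
  csInf_le (bddBelow_setOf_le_cdf hu) hx

lemma tendsto_quantile_atBot (hpos : ∀ x, 0 < cdf μ x) :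
    Tendsto (quantile μ) (𝓝[>] 0) atBot := by
  refine tendsto_atBot.2 fun M => ?_
  filter_upwards [self_mem_nhdsWithin, nhdsWithin_le_nhds (eventually_lt_nhds (hpos M))]
    with u hu₀ huM
  exact quantile_le hu₀ huM.le

variable [IsProbabilityMeasure μ]

lemma continuous_cdf [NullSingletonClass μ] : Continuous (cdf μ) := by
  refine continuous_iff_continuousAt.2 fun x => ?_
  rw [(monotone_cdf μ).continuousAt_iff_leftLim_eq_rightLim, StieltjesFunction.rightLim_eq]
  have h := (cdf μ).measure_singleton x
  rw [measure_cdf, measure_singleton, eq_comm, ENNReal.ofReal_eq_zero, sub_nonpos] at h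
  exact le_antisymm ((monotone_cdf μ).leftLim_le le_rfl) h

lemma measureReal_preimage_Iic_of_map_eq {Ω : Type*} [MeasurableSpace Ω] {P : Measure Ω}
    {X : Ω → ℝ} (hX : P.map X = μ) (x : ℝ) : P.real (X ⁻¹' Iic x) = cdf μ x := by
  have hXm : AEMeasurable X P := .of_map_ne_zero (hX ▸ IsProbabilityMeasure.ne_zero μ)
  rw [cdf_eq_real, ← hX, map_measureReal_apply_of_aemeasurable hXm measurableSet_Iic]

lemma cdf_quantile [NullSingletonClass μ] {u : ℝ} (hu₀ : 0 < u) (hu₁ : u < 1) :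
    cdf μ (quantile μ u) = u := by
  have hne : {x | u ≤ cdf μ x}.Nonempty :=
    ((tendsto_cdf_atTop μ).eventually (eventually_gt_nhds hu₁)).exists.imp fun _ h => h.le
  have hclosed : IsClosed {x | u ≤ cdf μ x} := isClosed_le continuous_const continuous_cdf
  refine le_antisymm (not_lt.1 fun h => ?_) (hclosed.csInf_mem hne (bddBelow_setOf_le_cdf hu₀))
  obtain ⟨x, hxq, hx⟩ :=
    ((continuous_cdf.tendsto (quantile μ u)).eventually (eventually_gt_nhds h)).exists_lt
  exact hxq.not_ge (quantile_le hu₀ hx.le)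

lemma measureReal_preimage_Iic_quantile [NullSingletonClass μ] {Ω : Type*} [MeasurableSpace Ω]
    {P : Measure Ω} {X : Ω → ℝ} (hX : P.map X = μ) {u : ℝ} (hu₀ : 0 < u) (hu₁ : u < 1) :
    P.real (X ⁻¹' Iic (quantile μ u)) = u := by
  rw [measureReal_preimage_Iic_of_map_eq hX, cdf_quantile hu₀ hu₁]

end Quantile

section StandardGaussian

instance : NullSingletonClass (gaussianReal 0 1) := nullSingletonClass_gaussianReal one_ne_zero

lemma gaussianPDFReal_zero_one (x : ℝ) :
    gaussianPDFReal 0 1 x = (√(2 * π))⁻¹ * exp (-x ^ 2 / 2) := by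
  simp [gaussianPDFReal]

lemma cdf_gaussianReal_le_exp {x : ℝ} (hx : x ≤ 0) :
    cdf (gaussianReal 0 1) x ≤ exp (-x ^ 2 / 2) := by
  have h := measure_le_le_exp_mul_mgf (X := id) x hx
    (integrable_exp_mul_gaussianReal (μ := 0) (v := 1) x)
  rw [mgf_id_gaussianReal, ← exp_add] at h
  rw [cdf_eq_real]
  convert h using 2
  · rfl
  · push_cast; ring

lemma gaussianPDFReal_sub_one_le_cdf {x : ℝ} (hx : x ≤ 0) :
    gaussianPDFReal 0 1 (x - 1) ≤ cdf (gaussianReal 0 1) x := by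
  have hint : Integrable (gaussianPDFReal 0 1) := integrable_gaussianPDFReal 0 1
  rw [cdf_eq_real, measureReal_def, gaussianReal_apply_eq_integral 0 one_ne_zero,
    ENNReal.toReal_ofReal
      (setIntegral_nonneg measurableSet_Iic fun t _ => gaussianPDFReal_nonneg 0 1 t)]
  calc gaussianPDFReal 0 1 (x - 1)
      = ∫ _ in Ioc (x - 1) x, gaussianPDFReal 0 1 (x - 1) := by
        simp [Real.volume_real_Ioc_of_le (by linarith : x - 1 ≤ x)]
    _ ≤ ∫ t in Ioc (x - 1) x, gaussianPDFReal 0 1 t := by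
        refine setIntegral_mono_on (integrableOn_const (by simp)) hint.integrableOn
          measurableSet_Ioc fun t ht => ?_
        rw [gaussianPDFReal_zero_one, gaussianPDFReal_zero_one]
        gcongr _ * exp ?_
        nlinarith [ht.1, ht.2]
    _ ≤ ∫ t in Iic x, gaussianPDFReal 0 1 t :=
        setIntegral_mono_set hint.integrableOn (ae_of_all _ (gaussianPDFReal_nonneg 0 1))
          (ae_of_all _ fun _ ht => ht.2)

lemma cdf_gaussianReal_pos (x : ℝ) : 0 < cdf (gaussianReal 0 1) x :=
  (gaussianPDFReal_pos 0 1 _ one_ne_zero).trans_le <|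
    (gaussianPDFReal_sub_one_le_cdf (min_le_right x 0)).trans (monotone_cdf _ (min_le_left x 0))

lemma tendsto_cdf_gaussianReal_rpow_mul_atBot {ε c : ℝ} (hc : 0 ≤ c) (hcε : c ^ 2 < 1 + ε) :
    Tendsto (fun x => cdf (gaussianReal 0 1) x ^ (-1 - ε) * cdf (gaussianReal 0 1) (c * x))
      atBot atTop := by
  set a := (1 + ε - c ^ 2) / 2
  have ha : 0 < a := by simp only [a]; linarith
  have hbound : ∀ x ≤ 0, (√(2 * π))⁻¹ * exp (x * (a * x + c) - 1 / 2) ≤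
      cdf (gaussianReal 0 1) x ^ (-1 - ε) * cdf (gaussianReal 0 1) (c * x) := by
    intro x hx
    have hupper : exp (-x ^ 2 / 2 * (-1 - ε)) ≤ cdf (gaussianReal 0 1) x ^ (-1 - ε) := by
      rw [exp_mul]
      exact rpow_le_rpow_of_nonpos (cdf_gaussianReal_pos x) (cdf_gaussianReal_le_exp hx)
        (by nlinarith)
    have hlower := gaussianPDFReal_sub_one_le_cdf (mul_nonpos_of_nonneg_of_nonpos hc hx)
    rw [gaussianPDFReal_zero_one] at hlower
    calc (√(2 * π))⁻¹ * exp (x * (a * x + c) - 1 / 2)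
        = exp (-x ^ 2 / 2 * (-1 - ε)) * ((√(2 * π))⁻¹ * exp (-(c * x - 1) ^ 2 / 2)) := by
          rw [mul_left_comm, ← exp_add]; simp only [a]; ring_nf
      _ ≤ _ := mul_le_mul hupper hlower (by positivity) (rpow_nonneg (cdf_nonneg _ x) _)
  have hexp : Tendsto (fun x => x * (a * x + c) - 1 / 2) atBot atTop :=
    tendsto_atTop_add_const_right _ _ <| tendsto_id.atBot_mul_atBot₀ <|
      tendsto_atBot_add_const_right _ _ (tendsto_id.const_mul_atBot ha)
  have hK : 0 < (√(2 * π))⁻¹ := inv_pos.2 (sqrt_pos.2 (by positivity))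
  refine tendsto_atTop_mono' _ ?_ ((tendsto_exp_atTop.comp hexp).const_mul_atTop hK)
  filter_upwards [eventually_le_atBot 0] with x hx using hbound x hx

end StandardGaussian

lemma tendsto_log_div_log_of_tendsto_rpow_mul {f : ℝ → ℝ} (hle : ∀ᶠ u in 𝓝[>] 0, f u ≤ u)
    (hf : ∀ ε > (0 : ℝ), Tendsto (fun u => u ^ (-1 - ε) * f u) (𝓝[>] 0) atTop) :
    Tendsto (fun u => log u / log (f u)) (𝓝[>] 0) (𝓝 1) := by
  have hbounds : ∀ ε > (0 : ℝ), ∀ᶠ u in 𝓝[>] 0,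
      1 ≤ log (f u) / log u ∧ log (f u) / log u ≤ 1 + ε := by
    intro ε hε
    filter_upwards [hle, (hf ε hε).eventually_ge_atTop 1, self_mem_nhdsWithin,
      nhdsWithin_le_nhds (eventually_lt_nhds one_pos)] with u hfu hgrow hu₀ hu₁
    have hlog : log u < 0 := log_neg hu₀ hu₁
    have hpow : u ^ (1 + ε) ≤ f u := by
      have := mul_le_mul_of_nonneg_left hgrow (rpow_nonneg hu₀.le (1 + ε))
      rwa [mul_one, ← mul_assoc, ← rpow_add hu₀, show 1 + ε + (-1 - ε) = 0 by ring, rpow_zero,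
        one_mul] at this
    have hfpos : 0 < f u := (rpow_pos_of_pos hu₀ _).trans_le hpow
    constructor
    · rw [le_div_iff_of_neg hlog, one_mul]
      exact log_le_log hfpos hfu
    · rw [div_le_iff_of_neg hlog, ← log_rpow hu₀]
      exact log_le_log (rpow_pos_of_pos hu₀ _) hpow
  have hratio : Tendsto (fun u => log (f u) / log u) (𝓝[>] 0) (𝓝 1) := by
    refine tendsto_order.2 ⟨fun a ha => ?_, fun b hb => ?_⟩
    · filter_upwards [hbounds 1 one_pos] with u hu using ha.trans_le hu.1
    · filter_upwards [hbounds ((b - 1) / 2) (by linarith)] with u hu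
      linarith [hu.2]
  simpa using hratio.inv₀ one_ne_zero

section Mixture

variable {Ω : Type*} [MeasurableSpace Ω] {P : Measure Ω}

lemma ProbabilityTheory.iIndepFun.measure_inter_preimage_eq_mul₃ {β : Type*} [MeasurableSpace β]
    {X Z R : Ω → β} (h : iIndepFun ![X, Z, R] P) {A B D : Set β} (hA : MeasurableSet A)
    (hB : MeasurableSet B) (hD : MeasurableSet D) :
    P (X ⁻¹' A ∩ Z ⁻¹' B ∩ R ⁻¹' D) = P (X ⁻¹' A) * P (Z ⁻¹' B) * P (R ⁻¹' D) := by
  have hprod := h.meas_iInter (s := ![X ⁻¹' A, Z ⁻¹' B, R ⁻¹' D]) fun i => by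
    fin_cases i
    exacts [⟨A, hA, rfl⟩, ⟨B, hB, rfl⟩, ⟨D, hD, rfl⟩]
  have hinter : X ⁻¹' A ∩ Z ⁻¹' B ∩ R ⁻¹' D = ⋂ i, ![X ⁻¹' A, Z ⁻¹' B, R ⁻¹' D] i := by
    ext ω
    simp [Fin.forall_fin_succ, and_assoc]
  rw [hinter, hprod, Fin.prod_univ_three]
  rfl

lemma mul_measureReal_le_measureReal_joint_le [IsFiniteMeasure P] {X Z R S : Ω → ℝ}
    (hindep : iIndepFun ![X, Z, R] P) (hS : ∀ ω, 0 ≤ S ω) {ρ₀ q : ℝ} (hρ₀ : 0 < ρ₀)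
    (hρ₁ : ρ₀ ≤ 1) (hq : q ≤ 0) :
    P.real (X ⁻¹' Iic (q / ρ₀)) * P.real (Z ⁻¹' Iic 0) * P.real (R ⁻¹' Ioi ρ₀) ≤
      P.real {ω | X ω ≤ q ∧ R ω * X ω + S ω * Z ω ≤ q} := by
  simp only [measureReal_def, ← ENNReal.toReal_mul, ← hindep.measure_inter_preimage_eq_mul₃
    measurableSet_Iic measurableSet_Iic measurableSet_Ioi]
  refine measureReal_mono ?_
  rintro ω ⟨⟨hX, hZ⟩, hR⟩
  simp only [mem_preimage, mem_Iic, mem_Ioi] at hX hZ hR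
  have hqρ : q / ρ₀ ≤ q := by rw [div_le_iff₀ hρ₀]; nlinarith
  have hρX : ρ₀ * X ω ≤ q := by rwa [← le_div_iff₀' hρ₀]
  refine ⟨hX.trans hqρ, ?_⟩
  nlinarith [mul_nonpos_of_nonneg_of_nonpos (hS ω) hZ]

lemma tendsto_rpow_mul_measureReal_joint_le_quantile [IsProbabilityMeasure P] {X Z R S : Ω → ℝ}
    (hX : P.map X = gaussianReal 0 1) (hZ : P.map Z = gaussianReal 0 1)
    (hRsup : ∀ ρ₀ < (1 : ℝ), 0 < P {ω | R ω > ρ₀}) (hindep : iIndepFun ![X, Z, R] P)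
    (hS : ∀ ω, 0 ≤ S ω) {ε : ℝ} (hε : 0 < ε) :
    Tendsto (fun u => u ^ (-1 - ε) * P.real {ω | X ω ≤ quantile (gaussianReal 0 1) u ∧
      R ω * X ω + S ω * Z ω ≤ quantile (gaussianReal 0 1) u}) (𝓝[>] 0) atTop := by
  obtain ⟨ρ₀, hρ₀, hρ₁, hsq⟩ : ∃ ρ₀ : ℝ, 0 < ρ₀ ∧ ρ₀ < 1 ∧ ρ₀⁻¹ ^ 2 < 1 + ε := by
    have h1 : 1 < √(1 + ε / 2) := by rw [lt_sqrt zero_le_one]; linarith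
    refine ⟨(√(1 + ε / 2))⁻¹, by positivity, inv_lt_one_of_one_lt₀ h1, ?_⟩
    rw [inv_inv, sq_sqrt (by positivity)]
    linarith
  have hc : 0 < cdf (gaussianReal 0 1) 0 * P.real (R ⁻¹' Ioi ρ₀) :=
    mul_pos (cdf_gaussianReal_pos 0) (ENNReal.toReal_pos (hRsup ρ₀ hρ₁).ne' (measure_ne_top _ _))
  have hq := tendsto_quantile_atBot cdf_gaussianReal_pos
  refine tendsto_atTop_mono' _ ?_ <| ((tendsto_cdf_gaussianReal_rpow_mul_atBot
    (inv_nonneg.2 hρ₀.le) hsq).const_mul_atTop hc).comp hq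
  filter_upwards [self_mem_nhdsWithin, nhdsWithin_le_nhds (eventually_lt_nhds one_pos),
    hq.eventually_le_atBot 0] with u hu₀ hu₁ hq₀
  have hjoint := mul_measureReal_le_measureReal_joint_le (S := S) hindep hS hρ₀ hρ₁.le hq₀
  rw [measureReal_preimage_Iic_of_map_eq hX, measureReal_preimage_Iic_of_map_eq hZ] at hjoint
  calc _ = cdf (gaussianReal 0 1) (quantile (gaussianReal 0 1) u) ^ (-1 - ε) *
        (cdf (gaussianReal 0 1) (quantile (gaussianReal 0 1) u / ρ₀) *
          cdf (gaussianReal 0 1) 0 * P.real (R ⁻¹' Ioi ρ₀)) := by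
        simp only [Function.comp, div_eq_inv_mul]; ring
    _ ≤ _ := by
        rw [cdf_quantile hu₀ hu₁]
        exact mul_le_mul_of_nonneg_left hjoint (rpow_nonneg hu₀.le _)

end Mixture

theorem gaussian_mixture_near_asymptotic_dependence_general
    {Ω : Type*} [MeasurableSpace Ω] (P : Measure Ω) [IsProbabilityMeasure P]
    (X Z R : Ω → ℝ)
    (hX : Measure.map X P = gaussianReal 0 1)
    (hZ : Measure.map Z P = gaussianReal 0 1)
    (hRsup : ∀ ρ₀ < (1 : ℝ), 0 < P {ω | R ω > ρ₀})
    (hindep : iIndepFun ![X, Z, R] P)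
    (Y : Ω → ℝ) (hY : Y = fun ω => R ω * X ω + Real.sqrt (1 - R ω ^ 2) * Z ω)
    (Φinv : ℝ → ℝ)
    (hΦinv : Φinv = fun p => sInf {x : ℝ | p ≤ ((gaussianReal 0 1) (Set.Iic x)).toReal})
    (C : ℝ → ℝ)
    (hC : C = fun u => (P {ω | X ω ≤ Φinv u ∧ Y ω ≤ Φinv u}).toReal) :
    (∀ ε > (0 : ℝ),
      Filter.Tendsto (fun u : ℝ => u ^ (-1 - ε) * C u)
        (nhdsWithin 0 (Set.Ioi 0)) Filter.atTop) ∧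
    Filter.Tendsto (fun u : ℝ => Real.log u / Real.log (C u))
      (nhdsWithin 0 (Set.Ioi 0)) (nhds 1) := by
  have hΦinv' : Φinv = quantile (gaussianReal 0 1) := by
    subst hΦinv
    ext u
    simp only [quantile, cdf_eq_real, measureReal_def]
  subst hC hY hΦinv'
  have hgrowth := fun ε (hε : 0 < ε) => tendsto_rpow_mul_measureReal_joint_le_quantile
    hX hZ hRsup hindep (fun ω => sqrt_nonneg (1 - R ω ^ 2)) hε
  refine ⟨hgrowth, tendsto_log_div_log_of_tendsto_rpow_mul ?_ hgrowth⟩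
  filter_upwards [self_mem_nhdsWithin, nhdsWithin_le_nhds (eventually_lt_nhds one_pos)]
    with u hu₀ hu₁
  exact (measureReal_mono fun ω hω => hω.1).trans_eq
    (measureReal_preimage_Iic_quantile hX hu₀ hu₁)

theorem gaussian_mixture_near_asymptotic_dependence
    {Ω : Type*} [MeasurableSpace Ω] (P : Measure Ω) [IsProbabilityMeasure P]
    (X Z R : Ω → ℝ)
    (hX : Measure.map X P = gaussianReal 0 1)
    (hZ : Measure.map Z P = gaussianReal 0 1)
    (hR : ∀ ω, R ω ∈ Set.Ioo (-1 : ℝ) 1)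
    (hRsup : ∀ ρ₀ < (1 : ℝ), 0 < P {ω | R ω > ρ₀})
    (hindep : iIndepFun ![X, Z, R] P)
    (Y : Ω → ℝ) (hY : Y = fun ω => R ω * X ω + Real.sqrt (1 - R ω ^ 2) * Z ω)
    (Φinv : ℝ → ℝ)
    (hΦinv : Φinv = fun p => sInf {x : ℝ | p ≤ ((gaussianReal 0 1) (Set.Iic x)).toReal})
    (C : ℝ → ℝ)
    (hC : C = fun u => (P {ω | X ω ≤ Φinv u ∧ Y ω ≤ Φinv u}).toReal) :
    (∀ ε > (0 : ℝ),
      Filter.Tendsto (fun u : ℝ => u ^ (-1 - ε) * C u)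
        (nhdsWithin 0 (Set.Ioi 0)) Filter.atTop) ∧
    Filter.Tendsto (fun u : ℝ => Real.log u / Real.log (C u))
      (nhdsWithin 0 (Set.Ioi 0)) (nhds 1) :=
  gaussian_mixture_near_asymptotic_dependence_general P X Z R hX hZ hRsup hindep Y hY Φinv hΦinv C
    hC
end

section
/- With the setup of the Gaussian correlation mixture (X standard normal, Y = ρX + √(1-ρ²)Z, Z standard normal, all independent, ρ ∈ (-1,1)), for every ρ₀ ∈ (0,1) and u ∈ (0,1/2): P(X > Φ^{-1}(1-u), Y > Φ^{-1}(1-u)) ≥ (1/2) P(ρ > ρ₀) P(X > Φ^{-1}(1-u)/ρ₀). -/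
/-!
On the event `{X > Φ⁻¹(1-u)/ρ₀, ρ > ρ₀, Z > 0}` we have `X > Φ⁻¹(1-u)` (as `Φ⁻¹(1-u) ≥ 0` and
`ρ₀ < 1`) and `ρX + √(1-ρ²)Z ≥ ρX > ρ₀X > Φ⁻¹(1-u)`. By independence the probability of this event
is the product of the three marginal probabilities, and `P(Z > 0) = 1/2` by symmetry of the
Gaussian.
-/

open MeasureTheory ProbabilityTheory Set

/-- For `μ = gaussianReal 0 1` this is the paper's `Φ⁻¹`. -/
noncomputable def lowerQuantile (μ : Measure ℝ) (p : ℝ) : ℝ :=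
  sInf {x : ℝ | p ≤ (μ (Iic x)).toReal}

lemma lowerQuantile_nonneg {μ : Measure ℝ} [IsFiniteMeasure μ] {p : ℝ}
    (hp : (μ (Iic 0)).toReal < p) : 0 ≤ lowerQuantile μ p := by
  refine Real.sInf_nonneg fun x hx => ?_
  by_contra! hx0
  have hmono : (μ (Iic x)).toReal ≤ (μ (Iic 0)).toReal :=
    ENNReal.toReal_mono (measure_ne_top μ _) (measure_mono (Iic_subset_Iic.mpr hx0.le))
  exact (hmono.trans_lt hp).not_ge hx

lemma measure_Ioi_zero_eq_half_of_map_neg {μ : Measure ℝ} [IsProbabilityMeasure μ]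
    (hneg : μ.map (fun x => -x) = μ) (h0 : μ {0} = 0) : μ (Ioi 0) = 2⁻¹ := by
  have hsymm : μ (Iio 0) = μ (Ioi 0) := by
    conv_lhs => rw [← hneg]
    rw [Measure.map_apply measurable_neg measurableSet_Iio]
    congr 1
    ext x
    simp
  have hIic : μ (Iic 0) = μ (Ioi 0) := by
    rw [← hsymm, measure_congr (Iio_ae_eq_Iic' h0)]
  have htotal : μ (Ioi 0) * 2 = 1 := by
    rw [mul_two]
    nth_rewrite 1 [← hIic, ← compl_Iic]
    exact prob_add_prob_compl measurableSet_Iic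
  exact ENNReal.eq_inv_of_mul_eq_one_left htotal

lemma gaussianReal_Ioi_zero {v : NNReal} (hv : v ≠ 0) : gaussianReal 0 v (Ioi 0) = 2⁻¹ :=
  measure_Ioi_zero_eq_half_of_map_neg (by simpa using gaussianReal_map_neg (μ := 0) (v := v))
    (gaussianReal_absolutelyContinuous 0 hv (measure_singleton 0))

lemma gaussianReal_Iic_zero {v : NNReal} (hv : v ≠ 0) : gaussianReal 0 v (Iic 0) = 2⁻¹ := by
  rw [← compl_Ioi, prob_compl_eq_one_sub measurableSet_Ioi, gaussianReal_Ioi_zero hv,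
    ENNReal.one_sub_inv_two]

lemma ProbabilityTheory.iIndepFun.measure_inter_preimage_eq_mul_three {Ω β : Type*} [MeasurableSpace Ω]
    [MeasurableSpace β] {μ : Measure Ω} {f g h : Ω → β} (hind : iIndepFun ![f, g, h] μ)
    {s t r : Set β} (hs : MeasurableSet s) (ht : MeasurableSet t) (hr : MeasurableSet r) :
    μ (f ⁻¹' s ∩ g ⁻¹' t ∩ h ⁻¹' r) = μ (f ⁻¹' s) * μ (g ⁻¹' t) * μ (h ⁻¹' r) := by
  have hmeas : ∀ i, MeasurableSet[MeasurableSpace.comap (![f, g, h] i) inferInstance]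
      (![f ⁻¹' s, g ⁻¹' t, h ⁻¹' r] i) := by
    intro i
    fin_cases i
    exacts [⟨s, hs, rfl⟩, ⟨t, ht, rfl⟩, ⟨r, hr, rfl⟩]
  have hinter : ⋂ i, ![f ⁻¹' s, g ⁻¹' t, h ⁻¹' r] i = f ⁻¹' s ∩ g ⁻¹' t ∩ h ⁻¹' r := by
    ext ω
    simp [Fin.forall_fin_succ, and_assoc]
  have := hind.meas_iInter hmeas
  rwa [Fin.prod_univ_three, hinter] at this

lemma lt_and_lt_mul_add_mul_of_div_lt {a ρ₀ x r s z : ℝ} (ha : 0 ≤ a) (hρ₀ : 0 < ρ₀)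
    (hρ₀1 : ρ₀ ≤ 1) (hx : a / ρ₀ < x) (hr : ρ₀ < r) (hs : 0 ≤ s) (hz : 0 ≤ z) :
    a < x ∧ a < r * x + s * z := by
  have hax : a < ρ₀ * x := (div_lt_iff₀' hρ₀).mp hx
  have hx0 : 0 < x := (div_nonneg ha hρ₀.le).trans_lt hx
  constructor <;> nlinarith [mul_nonneg hs hz]

theorem gaussian_mixture_joint_tail_lower_bound_general
    {Ω : Type*} [MeasurableSpace Ω] (P : Measure Ω) [IsProbabilityMeasure P]
    (X Z R : Ω → ℝ)
    (hZ : Measure.map Z P = gaussianReal 0 1)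
    (hindep : iIndepFun ![X, Z, R] P)
    (Y : Ω → ℝ) (hY : Y = fun ω => R ω * X ω + Real.sqrt (1 - R ω ^ 2) * Z ω)
    (Φinv : ℝ → ℝ)
    (hΦinv : Φinv = fun p => sInf {x : ℝ | p ≤ ((gaussianReal 0 1) (Set.Iic x)).toReal})
    (ρ₀ : ℝ) (hρ₀ : ρ₀ ∈ Set.Ioo (0 : ℝ) 1)
    (u : ℝ) (hu : u ∈ Set.Ioo (0 : ℝ) (1 / 2)) :
    P {ω | X ω > Φinv (1 - u) ∧ Y ω > Φinv (1 - u)} ≥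
      (1 / 2 : ENNReal) * P {ω | R ω > ρ₀} * P {ω | X ω > Φinv (1 - u) / ρ₀} := by
  obtain ⟨hρ₀0, hρ₀1⟩ := hρ₀
  set a := Φinv (1 - u)
  have ha : 0 ≤ a := by
    simp only [a, hΦinv]
    refine lowerQuantile_nonneg ?_
    rw [gaussianReal_Iic_zero one_ne_zero]
    norm_num
    linarith [hu.2]
  have hZpos : P (Z ⁻¹' Ioi 0) = 2⁻¹ := by
    have hZmeas : AEMeasurable Z P := .of_map_ne_zero (hZ ▸ IsProbabilityMeasure.ne_zero _)
    rw [← Measure.map_apply_of_aemeasurable hZmeas measurableSet_Ioi, hZ,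
      gaussianReal_Ioi_zero one_ne_zero]
  calc (1 / 2 : ENNReal) * P (R ⁻¹' Ioi ρ₀) * P (X ⁻¹' Ioi (a / ρ₀))
      = P (X ⁻¹' Ioi (a / ρ₀) ∩ Z ⁻¹' Ioi 0 ∩ R ⁻¹' Ioi ρ₀) := by
        rw [hindep.measure_inter_preimage_eq_mul_three measurableSet_Ioi measurableSet_Ioi
          measurableSet_Ioi, hZpos, one_div]
        ring
    _ ≤ P {ω | X ω > a ∧ Y ω > a} := by
        refine measure_mono fun ω ⟨⟨hXω, hZω⟩, hRω⟩ => ?_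
        exact hY ▸ lt_and_lt_mul_add_mul_of_div_lt ha hρ₀0 hρ₀1.le hXω hRω (Real.sqrt_nonneg _)
          hZω.le

theorem gaussian_mixture_joint_tail_lower_bound
    {Ω : Type*} [MeasurableSpace Ω] (P : Measure Ω) [IsProbabilityMeasure P]
    (X Z R : Ω → ℝ)
    (hX : Measure.map X P = gaussianReal 0 1)
    (hZ : Measure.map Z P = gaussianReal 0 1)
    (hR : ∀ ω, R ω ∈ Set.Ioo (-1 : ℝ) 1)
    (hindep : iIndepFun ![X, Z, R] P)
    (Y : Ω → ℝ) (hY : Y = fun ω => R ω * X ω + Real.sqrt (1 - R ω ^ 2) * Z ω)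
    (Φinv : ℝ → ℝ)
    (hΦinv : Φinv = fun p => sInf {x : ℝ | p ≤ ((gaussianReal 0 1) (Set.Iic x)).toReal})
    (ρ₀ : ℝ) (hρ₀ : ρ₀ ∈ Set.Ioo (0 : ℝ) 1)
    (u : ℝ) (hu : u ∈ Set.Ioo (0 : ℝ) (1 / 2)) :
    P {ω | X ω > Φinv (1 - u) ∧ Y ω > Φinv (1 - u)} ≥
      (1 / 2 : ENNReal) * P {ω | R ω > ρ₀} * P {ω | X ω > Φinv (1 - u) / ρ₀} :=
  gaussian_mixture_joint_tail_lower_bound_general P X Z R hZ hindep Y hY Φinv hΦinv ρ₀ hρ₀ u hu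
end
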